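/- arXiv:math/0608207 — 8 statements merged into one kernel-verified Lean document; each statement's English description precedes it below -/
import Mathlib

section
/- Let G be a finite group, S = {x ∈ R[G] : Σ_g x_g = 1, x_g ≥ 0} the natural simplex, and x ∈ S. Let n_x = min{k ∈ ℕ : the coefficient of the identity e in x^k is nonzero}. Then the elements e, x, x², ..., x^{n_x - 1} are linearly independent in R[G]. -/
/-!
If `Σ cᵢ xⁱ = 0` with `i < n`, multiplying by `x^(n-j)` and reading off the coefficient of `e`
kills every term with `i < j` (its exponent lies strictly between `0` and `n`), so the relation
is triangular with diagonal entries `cⱼ (xⁿ)ₑ`, and `(xⁿ)ₑ ≠ 0` forces all `cⱼ = 0`, from the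
top index down.
-/

theorem linearIndependent_of_triangular_pairing {R M ι : Type*} [CommRing R] [NoZeroDivisors R]
    [AddCommGroup M] [Module R M] [Fintype ι] [LinearOrder ι] (v : ι → M)
    (ψ : ι → M →ₗ[R] R) (h_lt : ∀ i j, i < j → ψ j (v i) = 0) (h_diag : ∀ j, ψ j (v j) ≠ 0) :
    LinearIndependent R v := by
  rw [Fintype.linearIndependent_iff]
  intro c hc j
  induction j using WellFoundedGT.induction with
  | _ j ih =>
  have hψ : ∑ i, c i * ψ j (v i) = 0 := by
    simpa only [map_sum, map_smul, smul_eq_mul, map_zero] using congrArg (ψ j) hc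
  rw [Finset.sum_eq_single j] at hψ
  · exact (mul_eq_zero.mp hψ).resolve_right (h_diag j)
  · intro i _ hij
    rcases hij.lt_or_gt with hij | hij
    · rw [h_lt i j hij, mul_zero]
    · rw [ih i hij, zero_mul]
  · exact fun h => absurd (Finset.mem_univ j) h

theorem linearIndependent_pow_of_apply_pow_eq_zero {R A : Type*} [CommRing R] [NoZeroDivisors R]
    [Ring A] [Algebra R A] (φ : A →ₗ[R] R) (x : A) (n : ℕ)
    (h_lt : ∀ k, 0 < k → k < n → φ (x ^ k) = 0) (h_n : φ (x ^ n) ≠ 0) :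
    LinearIndependent R (fun i : Fin n => x ^ (i : ℕ)) := by
  refine linearIndependent_of_triangular_pairing _
    (fun j => φ ∘ₗ LinearMap.mulRight R (x ^ (n - j))) (fun i j hij => ?_) (fun j => ?_)
  · simp only [LinearMap.comp_apply, LinearMap.mulRight_apply, ← pow_add]
    have := j.isLt
    have : (i : ℕ) < j := hij
    exact h_lt _ (by omega) (by omega)
  · simpa only [LinearMap.comp_apply, LinearMap.mulRight_apply, ← pow_add,
      Nat.add_sub_cancel' j.isLt.le] using h_n

theorem stmt4_general {G : Type*} [Group G]
    (x : MonoidAlgebra ℝ G)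
    (n : ℕ) (hn : IsLeast {k : ℕ | 0 < k ∧ (x ^ k).coeff (1 : G) ≠ 0} n) :
    LinearIndependent ℝ (fun i : Fin n => x ^ (i : ℕ)) := by
  refine linearIndependent_pow_of_apply_pow_eq_zero
    (Finsupp.lapply 1 ∘ₗ (MonoidAlgebra.coeffLinearEquiv ℝ).toLinearMap) x n
    (fun k hk hkn => ?_) hn.1.2
  by_contra h
  exact (hn.2 ⟨hk, h⟩).not_gt hkn

/-- For `x` in the simplex `S` of the real group algebra of a finite group `G`, with
`n_x = min{k ≥ 1 : (x^k)_e ≠ 0}`, the elements `e, x, x², …, x^{n_x - 1}` are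
linearly independent. -/
theorem stmt4 {G : Type*} [Group G] [Fintype G]
    (x : MonoidAlgebra ℝ G) (hx1 : ∑ g : G, x.coeff g = 1) (hx0 : ∀ g, 0 ≤ x.coeff g)
    (n : ℕ) (hn : IsLeast {k : ℕ | 0 < k ∧ (x ^ k).coeff (1 : G) ≠ 0} n) :
    LinearIndependent ℝ (fun i : Fin n => x ^ (i : ℕ)) :=
  stmt4_general x n hn
end

section
/- Let G be a finite group and S its simplex in R[G]. For x ∈ S with n_x finite, let G_x = ⟨Supp(x^{n_x})⟩ ≤ G, c_x = (1/|G_x|) Σ_{g∈G_x} g, and m_x = min{k : Supp(x^k) ⊆ G_x}. For nonnegative integers r₁, r₂, one has c_x x^{r₁} = c_x x^{r₂} if and only if r₁ ≡ r₂ (mod m_x). -/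
/-!
Let `S = Supp x` and `H = G_x`. Since the coefficients are nonnegative, `Supp (x ^ k) = S ^ k` and
`Supp (c_x * y) = H * Supp y`; moreover `c_x * y = (∑ y) • c_x` whenever `Supp y ⊆ H`. Hence
`c_x * x ^ m = c_x`, and `c_x * x ^ r` only depends on `r mod m`.

Conversely, `c_x * x ^ r₁ = c_x * x ^ r₂` yields `a ∈ S ^ r₁` and `b ∈ S ^ r₂` with `a * b⁻¹ ∈ H`.
The exponents `k` with `S ^ k ⊆ H` are multiples of `m`, and `S ^ k` meets `H` only for those:
if `g ∈ S ^ k ∩ H`, then `g⁻¹ ∈ S ^ (n * j)` for some `j` since `G` is finite, so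
`1 ∈ S ^ (k + n * j)` and `S ^ (k + n * j) ⊆ (S ^ (k + n * j)) ^ n ⊆ H`. Applying this to
`a * b⁻¹ = a * b ^ (|G| - 1)` and to `1 = b ^ |G|` gives `r₁ ≡ r₂ [MOD m]`.
-/

open scoped Pointwise

section PowersOfSubset

variable {G : Type*} [Group G] {S : Set G}

lemma pow_subset_of_pow_add_subset {H : Subgroup G} (hS : S.Nonempty) {a b : ℕ}
    (ha : S ^ a ⊆ H) (hab : S ^ (a + b) ⊆ H) : S ^ b ⊆ H := by
  obtain ⟨s, hs⟩ := hS.pow (n := a)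
  intro g hg
  have hsg : s * g ∈ H := hab (by rw [pow_add]; exact Set.mul_mem_mul hs hg)
  simpa using H.mul_mem (H.inv_mem (ha hs)) hsg

lemma dvd_of_pow_subset {H : Subgroup G} (hS : S.Nonempty) {m k : ℕ}
    (hm : IsLeast {k | 0 < k ∧ S ^ k ⊆ H} m) (hk : S ^ k ⊆ H) : m ∣ k := by
  have hq : S ^ (m * (k / m)) ⊆ H := by rw [pow_mul]; exact Subgroup.pow_subset hm.1.2
  have hr : S ^ (k % m) ⊆ H := pow_subset_of_pow_add_subset hS hq (by rwa [Nat.div_add_mod])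
  by_contra hmk
  have hle := hm.2 ⟨Nat.pos_of_ne_zero (mt Nat.dvd_of_mod_eq_zero hmk), hr⟩
  exact absurd (Nat.mod_lt k hm.1.1) (not_lt.2 hle)

lemma pow_subset_closure_of_one_mem {n k : ℕ} (hn : n ≠ 0) (hk : 1 ∈ S ^ k) :
    S ^ k ⊆ Subgroup.closure (S ^ n) :=
  calc S ^ k ⊆ (S ^ k) ^ n := Set.subset_pow hk hn
    _ = (S ^ n) ^ k := by rw [← pow_mul, ← pow_mul, mul_comm]
    _ ⊆ Subgroup.closure (S ^ n) := Subgroup.pow_subset Subgroup.subset_closure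

lemma exists_mem_pow_of_mem_closure [Finite G] {g : G} (hg : g ∈ Subgroup.closure S) :
    ∃ j, g ∈ S ^ j := by
  rw [← Subgroup.mem_toSubmonoid, Subgroup.closure_toSubmonoid_of_finite] at hg
  induction hg using Submonoid.closure_induction with
  | mem g hg => exact ⟨1, by rwa [pow_one]⟩
  | one => exact ⟨0, by simp⟩
  | mul a b _ _ ha hb =>
    obtain ⟨i, hi⟩ := ha
    obtain ⟨j, hj⟩ := hb
    exact ⟨i + j, by rw [pow_add]; exact Set.mul_mem_mul hi hj⟩

lemma inv_mem_pow_mul_card_sub_one [Finite G] {g : G} {k : ℕ} (hg : g ∈ S ^ k) :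
    g⁻¹ ∈ S ^ (k * (Nat.card G - 1)) := by
  have hg' : g * g ^ (Nat.card G - 1) = 1 := by
    rw [← pow_succ', Nat.sub_add_cancel Nat.card_pos, pow_card_eq_one']
  rw [inv_eq_of_mul_eq_one_right hg', pow_mul]
  exact Set.pow_mem_pow hg

lemma one_mem_pow_mul_card [Finite G] {g : G} {k : ℕ} (hg : g ∈ S ^ k) :
    (1 : G) ∈ S ^ (k * Nat.card G) := by
  rw [pow_mul, ← pow_card_eq_one' (x := g)]
  exact Set.pow_mem_pow hg

lemma dvd_of_mem_pow_of_mem_closure [Finite G] (hS : S.Nonempty) {n m : ℕ} (hn : n ≠ 0)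
    (hm : IsLeast {k | 0 < k ∧ S ^ k ⊆ Subgroup.closure (S ^ n)} m) {k : ℕ} {g : G}
    (hgk : g ∈ S ^ k) (hgH : g ∈ Subgroup.closure (S ^ n)) : m ∣ k := by
  obtain ⟨j, hj⟩ := exists_mem_pow_of_mem_closure (inv_mem hgH)
  have h1 : (1 : G) ∈ S ^ (k + n * j) := by
    rw [pow_add, pow_mul]; simpa using Set.mul_mem_mul hgk hj
  have hmn : m ∣ n := dvd_of_pow_subset hS hm Subgroup.subset_closure
  exact (Nat.dvd_add_left (hmn.mul_right j)).1 <|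
    dvd_of_pow_subset hS hm (pow_subset_closure_of_one_mem hn h1)

lemma modEq_of_mul_inv_mem_closure [Finite G] (hS : S.Nonempty) {n m : ℕ} (hn : n ≠ 0)
    (hm : IsLeast {k | 0 < k ∧ S ^ k ⊆ Subgroup.closure (S ^ n)} m) {i j : ℕ} {a b : G}
    (ha : a ∈ S ^ i) (hb : b ∈ S ^ j) (hab : a * b⁻¹ ∈ Subgroup.closure (S ^ n)) :
    i ≡ j [MOD m] := by
  set N := Nat.card G
  have hjN : j * N ≡ 0 [MOD m] := Nat.modEq_zero_iff_dvd.2 <|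
    dvd_of_mem_pow_of_mem_closure hS hn hm (one_mem_pow_mul_card hb) (one_mem _)
  have hij : i + j * (N - 1) ≡ 0 [MOD m] := Nat.modEq_zero_iff_dvd.2 <|
    dvd_of_mem_pow_of_mem_closure hS hn hm
      (by rw [pow_add]; exact Set.mul_mem_mul ha (inv_mem_pow_mul_card_sub_one hb)) hab
  have hN : N - 1 + 1 = N := Nat.sub_add_cancel Nat.card_pos
  calc i ≡ i + j * N [MOD m] := by simpa using (hjN.add_left i).symm
    _ = i + j * (N - 1) + j := by rw [add_assoc, ← mul_add_one, hN]
    _ ≡ 0 + j [MOD m] := hij.add_right j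
    _ = j := zero_add j

end PowersOfSubset

lemma mul_pow_eq_mul_pow_mod {M : Type*} [Monoid M] {c x : M} {m : ℕ} (h : c * x ^ m = c)
    (r : ℕ) : c * x ^ r = c * x ^ (r % m) := by
  have hq : ∀ q, c * x ^ (m * q) = c := by
    intro q
    induction q with
    | zero => simp
    | succ q ih => rw [mul_add, mul_one, pow_add, ← mul_assoc, ih, h]
  conv_lhs => rw [← Nat.div_add_mod r m, pow_add, ← mul_assoc, hq]

namespace MonoidAlgebra

section Nonneg

variable {R M : Type*} [Semiring R] [PartialOrder R] [Monoid M]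

lemma coeff_mul_nonneg [IsOrderedRing R] {f g : MonoidAlgebra R M} (hf : ∀ a, 0 ≤ f.coeff a)
    (hg : ∀ a, 0 ≤ g.coeff a) (a : M) : 0 ≤ (f * g).coeff a := by
  classical
  rw [coeff_mul]
  refine Finset.sum_nonneg fun u _ => Finset.sum_nonneg fun v _ => ?_
  exact ite_nonneg (mul_nonneg (hf u) (hg v)) le_rfl

lemma coeff_pow_nonneg [IsOrderedRing R] {x : MonoidAlgebra R M} (hx : ∀ a, 0 ≤ x.coeff a)
    (k : ℕ) (a : M) :
    0 ≤ (x ^ k).coeff a := by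
  induction k generalizing a with
  | zero =>
    classical
    rw [pow_zero, one_def, coeff_single, Finsupp.single_apply]
    exact ite_nonneg zero_le_one le_rfl
  | succ k ih => rw [pow_succ]; exact coeff_mul_nonneg ih hx a

lemma coe_support_mul_of_nonneg [IsStrictOrderedRing R] {f g : MonoidAlgebra R M}
    (hf : ∀ a, 0 ≤ f.coeff a) (hg : ∀ a, 0 ≤ g.coeff a) :
    ((f * g).coeff.support : Set M) = f.coeff.support * g.coeff.support := by
  classical
  rw [← Finset.coe_mul, Finset.coe_inj]
  refine (support_coeff_mul_subset f g).antisymm fun a ha => ?_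
  obtain ⟨u, hu, v, hv, rfl⟩ := Finset.mem_mul.1 ha
  have huv : 0 < f.coeff u * g.coeff v :=
    mul_pos ((hf u).lt_of_ne' (Finsupp.mem_support_iff.1 hu))
      ((hg v).lt_of_ne' (Finsupp.mem_support_iff.1 hv))
  rw [Finsupp.mem_support_iff, coeff_mul, Finsupp.sum]
  refine (Finset.sum_pos' (fun u' _ => Finset.sum_nonneg fun v' _ => ?_) ⟨u, hu, ?_⟩).ne'
  · exact ite_nonneg (mul_nonneg (hf u') (hg v')) le_rfl
  · refine Finset.sum_pos' (fun v' _ => ite_nonneg (mul_nonneg (hf u) (hg v')) le_rfl)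
      ⟨v, hv, ?_⟩
    beta_reduce
    rwa [if_pos rfl]

lemma coe_support_pow_of_nonneg [IsStrictOrderedRing R] {x : MonoidAlgebra R M}
    (hx : ∀ a, 0 ≤ x.coeff a) (k : ℕ) :
    ((x ^ k).coeff.support : Set M) = (x.coeff.support : Set M) ^ k := by
  induction k with
  | zero => simp [one_def, coeff_single, Set.singleton_one]
  | succ k ih => rw [pow_succ, coe_support_mul_of_nonneg (coeff_pow_nonneg hx k) hx, ih, pow_succ]

end Nonneg

lemma sum_coeff_pow {R M : Type*} [CommSemiring R] [Monoid M] [Fintype M]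
    (x : MonoidAlgebra R M) (k : ℕ) : ∑ a, (x ^ k).coeff a = (∑ a, x.coeff a) ^ k := by
  have augmentation : ∀ y : MonoidAlgebra R M, ∑ a, y.coeff a = lift R R M 1 y := by
    intro y
    rw [lift_apply, Finsupp.sum_fintype _ _ (by simp)]
    simp
  rw [augmentation, augmentation, map_pow]

variable {G : Type*} [Group G] [Fintype G]

open scoped Classical in
noncomputable def subgroupAverage (H : Subgroup G) : MonoidAlgebra ℝ G :=
  (Nat.card H : ℝ)⁻¹ • ∑ g ∈ Finset.univ.filter (· ∈ H), single g (1 : ℝ)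

open scoped Classical in
lemma coeff_subgroupAverage (H : Subgroup G) (g : G) :
    (subgroupAverage H).coeff g = if g ∈ H then (Nat.card H : ℝ)⁻¹ else 0 := by
  simp [subgroupAverage, coeff_sum, coeff_single, Finsupp.single_apply]

lemma coeff_subgroupAverage_nonneg (H : Subgroup G) (g : G) :
    0 ≤ (subgroupAverage H).coeff g := by
  rw [coeff_subgroupAverage]
  split_ifs <;> positivity

lemma coe_support_subgroupAverage (H : Subgroup G) :
    ((subgroupAverage H).coeff.support : Set G) = H := by
  ext g
  simp [coeff_subgroupAverage, Nat.card_pos.ne']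

lemma coe_support_subgroupAverage_mul {y : MonoidAlgebra ℝ G} (hy : ∀ a, 0 ≤ y.coeff a)
    (H : Subgroup G) :
    ((subgroupAverage H * y).coeff.support : Set G) = (H : Set G) * y.coeff.support := by
  rw [coe_support_mul_of_nonneg (coeff_subgroupAverage_nonneg H) hy, coe_support_subgroupAverage]

lemma subgroupAverage_mul_single_of_mem {H : Subgroup G} {b : G} (hb : b ∈ H) :
    subgroupAverage H * single b 1 = subgroupAverage H := by
  rw [subgroupAverage, smul_mul_assoc, Finset.sum_mul]
  congr 1
  refine Finset.sum_equiv (Equiv.mulRight b) (fun g => ?_) (fun g _ => ?_)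
  · simpa using (mul_mem_cancel_right hb).symm
  · rw [single_mul_single, mul_one, Equiv.coe_mulRight]

lemma subgroupAverage_mul_of_support_subset {H : Subgroup G} {y : MonoidAlgebra ℝ G}
    (hy : (y.coeff.support : Set G) ⊆ H) :
    subgroupAverage H * y = (∑ g, y.coeff g) • subgroupAverage H := by
  calc subgroupAverage H * y
      = ∑ b ∈ y.coeff.support, subgroupAverage H * single b (y.coeff b) := by
        conv_lhs => rw [← sum_coeff_single y]
        rw [Finsupp.sum, Finset.mul_sum]
    _ = ∑ b ∈ y.coeff.support, y.coeff b • subgroupAverage H := by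
        refine Finset.sum_congr rfl fun b hb => ?_
        have hsingle : single b (y.coeff b) = y.coeff b • single b (1 : ℝ) := by
          rw [smul_single, smul_eq_mul, mul_one]
        rw [hsingle, mul_smul_comm, subgroupAverage_mul_single_of_mem (hy hb)]
    _ = (∑ g, y.coeff g) • subgroupAverage H := by
        rw [← Finset.sum_smul, Finset.sum_subset (Finset.subset_univ _)
          (fun g _ hg => Finsupp.notMem_support_iff.1 hg)]

end MonoidAlgebra

open MonoidAlgebra

open scoped Classical in
/-- For `x` in the simplex of `R[G]`, with `n_x = min{k ≥ 1 : (x^k)_e ≠ 0}`,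
`G_x = ⟨Supp(x^{n_x})⟩`, `c_x = (1/|G_x|) Σ_{g∈G_x} g`, and
`m_x = min{k ≥ 1 : Supp(x^k) ⊆ G_x}`, one has
`c_x x^{r₁} = c_x x^{r₂}` iff `r₁ ≡ r₂ (mod m_x)`. -/
theorem stmt5 {G : Type*} [Group G] [Fintype G]
    (x : MonoidAlgebra ℝ G) (hx1 : ∑ g : G, x.coeff g = 1) (hx0 : ∀ g, 0 ≤ x.coeff g)
    (n : ℕ) (hn : IsLeast {k : ℕ | 0 < k ∧ (x ^ k).coeff (1 : G) ≠ 0} n)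
    (H : Subgroup G) (hH : H = Subgroup.closure ((x ^ n).coeff.support : Set G))
    (c : MonoidAlgebra ℝ G)
    (hc : c = (Nat.card H : ℝ)⁻¹ •
      ∑ g ∈ Finset.univ.filter (· ∈ H), MonoidAlgebra.single g (1 : ℝ))
    (m : ℕ) (hm : IsLeast {k : ℕ | 0 < k ∧ ((x ^ k).coeff.support : Set G) ⊆ (H : Set G)} m)
    (r₁ r₂ : ℕ) :
    c * x ^ r₁ = c * x ^ r₂ ↔ r₁ ≡ r₂ [MOD m] := by
  have hsupp := coe_support_pow_of_nonneg hx0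
  rw [hsupp] at hH
  simp only [hsupp] at hm
  subst hH hc
  rw [← subgroupAverage]
  set S : Set G := ↑x.coeff.support
  set H := Subgroup.closure (S ^ n)
  have hS : S.Nonempty := by
    rw [Finset.coe_nonempty, Finsupp.support_nonempty_iff]
    intro hx
    simp [hx] at hx1
  have hsupp_mul (r : ℕ) :
      ((subgroupAverage H * x ^ r).coeff.support : Set G) = H * S ^ r := by
    rw [coe_support_subgroupAverage_mul (coeff_pow_nonneg hx0 r), hsupp]
  constructor
  · intro h
    obtain ⟨a, ha⟩ := hS.pow (n := r₁)
    have ha' : a ∈ (H : Set G) * S ^ r₂ := by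
      rw [← hsupp_mul, ← h, hsupp_mul]
      simpa using Set.mul_mem_mul (one_mem H) ha
    obtain ⟨g, hg, b, hb, rfl⟩ := ha'
    exact modEq_of_mul_inv_mem_closure hS hn.1.1.ne' hm ha hb (by simpa using hg)
  · intro h
    have hxm : subgroupAverage H * x ^ m = subgroupAverage H := by
      rw [subgroupAverage_mul_of_support_subset (hsupp m ▸ hm.1.2), sum_coeff_pow, hx1,
        one_pow, one_smul]
    rw [mul_pow_eq_mul_pow_mod hxm r₁, mul_pow_eq_mul_pow_mod hxm r₂, h]
end

section
/- Let G be a finite group, S its simplex in R[G], and y ∈ S with y_e ≠ 0. Then the subgroup generated by Supp(y) equals G if and only if there exists n ∈ ℕ such that all coordinates of y^n are strictly positive. -/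
/-!
Since the coefficients of `y` are nonnegative, no cancellation occurs in `y ^ n`, so the
support of `y ^ n` is exactly `S ^ n` for `S = Supp(y)`. As `1 ∈ S`, the sets `S ^ n` increase
and exhaust the submonoid generated by `S`, which in a finite group is the subgroup generated
by `S`.
-/

open Pointwise

namespace MonoidAlgebra

variable {R G : Type*} [Semiring R] [LinearOrder R] [IsStrictOrderedRing R] [Group G]
  {x f : MonoidAlgebra R G}

lemma coeff_mul_nonneg_s6 (hx : ∀ g, 0 ≤ x.coeff g) (hf : ∀ g, 0 ≤ f.coeff g) (g : G) :
    0 ≤ (x * f).coeff g := by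
  rw [coeff_mul_apply_left]
  exact Finset.sum_nonneg fun a _ => mul_nonneg (hx a) (hf _)

lemma coeff_pow_nonneg_s6 (hx : ∀ g, 0 ≤ x.coeff g) (n : ℕ) (g : G) : 0 ≤ (x ^ n).coeff g := by
  induction n generalizing g with
  | zero =>
    rw [pow_zero, one_def, coeff_single]
    exact Finsupp.single_nonneg.mpr zero_le_one g
  | succ n ih => rw [pow_succ']; exact coeff_mul_nonneg_s6 hx ih g

lemma support_coeff_mul_of_nonneg (hx : ∀ g, 0 ≤ x.coeff g) (hf : ∀ g, 0 ≤ f.coeff g) :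
    ((x * f).coeff.support : Set G) = x.coeff.support * f.coeff.support := by
  ext g
  rw [Finset.mem_coe, Finsupp.mem_support_iff, coeff_mul_apply_left, Finsupp.sum, Ne,
    Finset.sum_eq_zero_iff_of_nonneg fun a _ => mul_nonneg (hx a) (hf _)]
  push Not
  constructor
  · rintro ⟨a, ha, hfa⟩
    exact ⟨a, ha, a⁻¹ * g, Finsupp.mem_support_iff.mpr (right_ne_zero_of_mul hfa),
      mul_inv_cancel_left a g⟩
  · intro hg
    obtain ⟨a, ha, b, hb, rfl⟩ := Set.mem_mul.mp hg
    refine ⟨a, ha, ?_⟩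
    rw [inv_mul_cancel_left]
    exact (mul_pos ((hx a).lt_of_ne' (Finsupp.mem_support_iff.mp ha))
      ((hf b).lt_of_ne' (Finsupp.mem_support_iff.mp hb))).ne'

lemma support_coeff_pow_of_nonneg (hx : ∀ g, 0 ≤ x.coeff g) (n : ℕ) :
    ((x ^ n).coeff.support : Set G) = (x.coeff.support : Set G) ^ n := by
  induction n with
  | zero => simp
  | succ n ih =>
    rw [pow_succ', support_coeff_mul_of_nonneg hx (coeff_pow_nonneg_s6 hx n), ih, pow_succ']

lemma coeff_pow_pos_iff_of_nonneg (hx : ∀ g, 0 ≤ x.coeff g) (n : ℕ) (g : G) :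
    0 < (x ^ n).coeff g ↔ g ∈ (x.coeff.support : Set G) ^ n := by
  rw [← support_coeff_pow_of_nonneg hx, Finset.mem_coe, Finsupp.mem_support_iff,
    (coeff_pow_nonneg_s6 hx n g).lt_iff_ne']

end MonoidAlgebra

lemma Submonoid.mem_closure_iff_exists_mem_pow {M : Type*} [Monoid M] {s : Set M} {x : M} :
    x ∈ closure s ↔ ∃ n, x ∈ s ^ n := by
  refine ⟨fun hx => ?_, fun ⟨n, hn⟩ => closure_pow_le (subset_closure hn)⟩
  induction hx using closure_induction with
  | mem x hx => exact ⟨1, by rwa [pow_one]⟩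
  | one => exact ⟨0, by simp⟩
  | mul x y _ _ hx hy =>
    obtain ⟨m, hm⟩ := hx
    obtain ⟨n, hn⟩ := hy
    exact ⟨m + n, pow_add s m n ▸ Set.mul_mem_mul hm hn⟩

lemma Subgroup.closure_eq_top_iff_exists_pow_eq_univ {G : Type*} [Group G] [Finite G]
    {s : Set G} (hs : 1 ∈ s) : closure s = ⊤ ↔ ∃ n, 0 < n ∧ s ^ n = Set.univ := by
  constructor
  · intro h
    have hpow (g : G) : ∃ n, g ∈ s ^ n := by
      rw [← Submonoid.mem_closure_iff_exists_mem_pow, ← closure_toSubmonoid_of_finite, h]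
      trivial
    choose m hm using hpow
    have := Fintype.ofFinite G
    refine ⟨Finset.univ.sup m + 1, Nat.succ_pos _, Set.eq_univ_of_forall fun g => ?_⟩
    exact Set.pow_subset_pow_right hs ((Finset.le_sup (Finset.mem_univ g)).trans (Nat.le_succ _))
      (hm g)
  · rintro ⟨n, -, hn⟩
    exact eq_top_iff.mpr fun g _ => closure_pow_le (subset_closure (hn ▸ Set.mem_univ g))

theorem stmt6_general {G : Type*} [Group G] [Fintype G]
    (y : MonoidAlgebra ℝ G) (hy0 : ∀ g, 0 ≤ y.coeff g)
    (hye : y.coeff 1 ≠ 0) :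
    Subgroup.closure (y.coeff.support : Set G) = ⊤ ↔
      ∃ n : ℕ, 0 < n ∧ ∀ g : G, 0 < (y ^ n).coeff g := by
  have hS : (1 : G) ∈ (y.coeff.support : Set G) := Finsupp.mem_support_iff.mpr hye
  simp only [Subgroup.closure_eq_top_iff_exists_pow_eq_univ hS,
    MonoidAlgebra.coeff_pow_pos_iff_of_nonneg hy0, Set.eq_univ_iff_forall]

/-- For `y` in the simplex of `R[G]` with `y_e ≠ 0`, the subgroup generated by `Supp(y)`
is all of `G` iff some power `y^n` has all coordinates strictly positive. -/
theorem stmt6 {G : Type*} [Group G] [Fintype G]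
    (y : MonoidAlgebra ℝ G) (hy1 : ∑ g : G, y.coeff g = 1) (hy0 : ∀ g, 0 ≤ y.coeff g)
    (hye : y.coeff 1 ≠ 0) :
    Subgroup.closure (y.coeff.support : Set G) = ⊤ ↔
      ∃ n : ℕ, 0 < n ∧ ∀ g : G, 0 < (y ^ n).coeff g :=
  stmt6_general y hy0 hye
end

section
/- Let G be a finite group and x an element of the simplex S ⊂ R[G] such that all coordinates of x are strictly positive. Then x^n converges to c = (1/|G|) Σ_{g∈G} g as n → ∞. -/
/-!
Let `ε > 0` be the smallest coefficient of `x`, so `x = ε • ∑ g + y` with `y ≥ 0` of mass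
`r = 1 - |G| ε < 1`. Multiplication by `∑ g` kills every `z` of augmentation zero, so left
multiplication by `x` contracts the ℓ¹-norm of such `z` by the factor `r`. Since `x c = c`, the
differences `x ^ n - c` have augmentation zero and satisfy `x ^ (n + 1) - c = x (x ^ n - c)`,
hence `‖x ^ n - c‖₁ ≤ r ^ n ‖1 - c‖₁ → 0`.
-/

open Filter Topology Finset

namespace MonoidAlgebra

variable {k G : Type*}

section Augmentation

variable [CommSemiring k] [Monoid G] [Fintype G]

noncomputable def augmentation : MonoidAlgebra k G →ₐ[k] k := lift k k G 1

lemma augmentation_apply (f : MonoidAlgebra k G) : augmentation f = ∑ g, f.coeff g := by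
  rw [augmentation, lift_apply, Finsupp.sum_fintype _ _ (by simp)]
  simp

end Augmentation

lemma coeff_mul_eq_sum [Semiring k] [Group G] [Fintype G] (f h : MonoidAlgebra k G) (g : G) :
    (f * h).coeff g = ∑ a, f.coeff a * h.coeff (a⁻¹ * g) := by
  rw [coeff_mul_apply_left, Finsupp.sum_fintype _ _ (by simp)]

section Real

variable [Fintype G]

noncomputable def l1Norm (f : MonoidAlgebra ℝ G) : ℝ := ∑ g, |f.coeff g|

lemma abs_coeff_le_l1Norm (f : MonoidAlgebra ℝ G) (g : G) : |f.coeff g| ≤ l1Norm f :=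
  single_le_sum (f := fun g => |f.coeff g|) (fun _ _ => abs_nonneg _) (mem_univ g)

noncomputable def barycenter : MonoidAlgebra ℝ G :=
  ∑ g, single g (Fintype.card G : ℝ)⁻¹

@[simp]
lemma coeff_barycenter (g : G) :
    (barycenter : MonoidAlgebra ℝ G).coeff g = (Fintype.card G : ℝ)⁻¹ := by
  classical
  simp [barycenter, coeff_sum, Finsupp.single_apply]

lemma augmentation_barycenter [Monoid G] : augmentation (barycenter : MonoidAlgebra ℝ G) = 1 := by
  simp [augmentation_apply]

variable [Group G]

/-- Doeblin's contraction: the part `ε` of `x` spread uniformly over `G` annihilates `z`. -/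
lemma l1Norm_mul_le {x z : MonoidAlgebra ℝ G} {ε : ℝ} (hε : ∀ g, ε ≤ x.coeff g)
    (hz : augmentation z = 0) :
    l1Norm (x * z) ≤ (augmentation x - Fintype.card G * ε) * l1Norm z := by
  rw [augmentation_apply] at hz ⊢
  have hcoeff : ∀ g, (x * z).coeff g = ∑ a, (x.coeff a - ε) * z.coeff (a⁻¹ * g) := fun g => by
    have hshift : ∑ a, z.coeff (a⁻¹ * g) = 0 :=
      ((Equiv.inv G).trans (Equiv.mulRight g)).sum_comp z.coeff ▸ hz
    simp only [coeff_mul_eq_sum, sub_mul, sum_sub_distrib, ← mul_sum, hshift, mul_zero, sub_zero]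
  calc l1Norm (x * z) ≤ ∑ g, ∑ a, (x.coeff a - ε) * |z.coeff (a⁻¹ * g)| := by
        refine sum_le_sum fun g _ => ?_
        rw [hcoeff]
        refine (abs_sum_le_sum_abs _ _).trans_eq (sum_congr rfl fun a _ => ?_)
        rw [abs_mul, abs_of_nonneg (sub_nonneg.2 (hε a))]
    _ = ∑ a, (x.coeff a - ε) * l1Norm z := by
        rw [sum_comm]
        refine sum_congr rfl fun a _ => ?_
        rw [← mul_sum]
        exact congrArg _ (Equiv.sum_comp (Equiv.mulLeft a⁻¹) fun g => |z.coeff g|)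
    _ = (∑ g, x.coeff g - Fintype.card G * ε) * l1Norm z := by
        rw [← sum_mul, sum_sub_distrib, sum_const, card_univ, nsmul_eq_mul]

lemma mul_barycenter (x : MonoidAlgebra ℝ G) :
    x * barycenter = augmentation x • barycenter := by
  ext g
  simp [coeff_mul_eq_sum, augmentation_apply, sum_mul]

lemma card_mul_le_augmentation {x : MonoidAlgebra ℝ G} {ε : ℝ} (hε : ∀ g, ε ≤ x.coeff g) :
    Fintype.card G * ε ≤ augmentation x := by
  rw [augmentation_apply, ← nsmul_eq_mul, ← card_univ, ← sum_const]
  exact sum_le_sum fun g _ => hε g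

lemma l1Norm_pow_sub_barycenter_le {x : MonoidAlgebra ℝ G} (hx : augmentation x = 1) {ε : ℝ}
    (hε : ∀ g, ε ≤ x.coeff g) (n : ℕ) :
    l1Norm (x ^ n - barycenter) ≤
      (1 - Fintype.card G * ε) ^ n * l1Norm (1 - barycenter : MonoidAlgebra ℝ G) := by
  have hr : 0 ≤ 1 - Fintype.card G * ε := sub_nonneg.2 (hx ▸ card_mul_le_augmentation hε)
  refine (le_geom (u := fun n => l1Norm (x ^ n - barycenter)) hr n fun m _ => ?_).trans_eq
    (by rw [pow_zero])
  have hstep : x ^ (m + 1) - barycenter = x * (x ^ m - barycenter) := by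
    rw [mul_sub, mul_barycenter, hx, one_smul, pow_succ']
  have hmass : augmentation (x ^ m - barycenter) = 0 := by
    rw [map_sub, map_pow, hx, one_pow, augmentation_barycenter, sub_self]
  simpa only [hstep, hx] using l1Norm_mul_le hε hmass

lemma tendsto_l1Norm_pow_sub_barycenter {x : MonoidAlgebra ℝ G} (hx : augmentation x = 1)
    (hpos : ∀ g, 0 < x.coeff g) :
    Tendsto (fun n => l1Norm (x ^ n - barycenter)) atTop (𝓝 0) := by
  set ε := univ.inf' univ_nonempty x.coeff
  have hε : ∀ g, ε ≤ x.coeff g := fun g => inf'_le _ (mem_univ g)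
  have hεpos : 0 < ε := (lt_inf'_iff _).2 fun g _ => hpos g
  have hr : 0 ≤ 1 - Fintype.card G * ε := sub_nonneg.2 (hx ▸ card_mul_le_augmentation hε)
  have hgeom := (tendsto_pow_atTop_nhds_zero_of_lt_one hr (sub_lt_self _ (by positivity))).mul_const
    (l1Norm (1 - barycenter : MonoidAlgebra ℝ G))
  rw [zero_mul] at hgeom
  exact squeeze_zero (fun n => sum_nonneg fun g _ => abs_nonneg _)
    (l1Norm_pow_sub_barycenter_le hx hε) hgeom

end Real
end MonoidAlgebra

open MonoidAlgebra

/-- For `x` in the simplex of `R[G]` with all coordinates strictly positive,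
`x^n` converges to the barycenter `c = (1/|G|) Σ_{g∈G} g` (coordinatewise). -/
theorem stmt7 {G : Type*} [Group G] [Fintype G]
    (x : MonoidAlgebra ℝ G) (hx1 : ∑ g : G, x.coeff g = 1) (hx0 : ∀ g, 0 < x.coeff g) :
    ∀ g : G, Tendsto (fun n : ℕ => (x ^ n).coeff g) atTop (nhds ((Fintype.card G : ℝ)⁻¹)) := by
  intro g
  have hx : augmentation x = 1 := by rwa [augmentation_apply]
  rw [tendsto_iff_norm_sub_tendsto_zero]
  refine squeeze_zero (fun n => norm_nonneg _) (fun n => ?_)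
    (tendsto_l1Norm_pow_sub_barycenter hx hx0)
  rw [Real.norm_eq_abs, ← coeff_barycenter g, ← Finsupp.sub_apply, ← coeff_sub]
  exact abs_coeff_le_l1Norm _ g
end

section
/- Let a₁, a₂, a₃, ... be nonnegative reals with Σ aᵢ = 1 and a = sup{a₁, a₂, ...}. Then for any k ≥ 2 and 2 ≤ i ≤ k, Σ_{j₁+...+jᵢ = k, jₗ ≥ 1} a_{j₁} a_{j₂} ⋯ a_{jᵢ} ≤ (1 - a_k)·a. -/
/-!
Split off the first part of a composition `j₁ + ⋯ + jᵢ = k`. The factor `a_{j₁}` is at most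
`a = sup aⱼ`, and the remaining parts `(j₂, …, jᵢ)` determine `j₁` and all lie in
`[1, k - 1]`. Hence the sum is at most `a · s^(i-1)`, where
`s = a₁ + ⋯ + a_{k-1} ≤ 1 - a_k ≤ 1`, and `i ≥ 2` gives `s^(i-1) ≤ s`.
-/

open Finset

def posAntidiagonalTuple (n k : ℕ) : Finset (Fin n → ℕ) :=
  (Nat.antidiagonalTuple n k).filter fun f => ∀ l, f l ≠ 0

section posAntidiagonalTuple

variable {n k : ℕ}

theorem mem_posAntidiagonalTuple {f : Fin n → ℕ} :
    f ∈ posAntidiagonalTuple n k ↔ ∑ l, f l = k ∧ ∀ l, f l ≠ 0 := by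
  rw [posAntidiagonalTuple, mem_filter, Nat.mem_antidiagonalTuple]

theorem head_add_sum_tail_eq {f : Fin (n + 1) → ℕ} (hf : f ∈ posAntidiagonalTuple (n + 1) k) :
    f 0 + ∑ l, Fin.tail f l = k :=
  (Fin.sum_univ_succ f).symm.trans (mem_posAntidiagonalTuple.1 hf).1

theorem injOn_tail_posAntidiagonalTuple :
    Set.InjOn Fin.tail (posAntidiagonalTuple (n + 1) k : Set (Fin (n + 1) → ℕ)) := by
  intro f hf g hg htail
  have hf0 := head_add_sum_tail_eq hf
  have hg0 := head_add_sum_tail_eq hg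
  rw [← Fin.cons_self_tail f, ← Fin.cons_self_tail g, htail]
  rw [htail] at hf0
  congr 1
  omega

theorem tail_mem_piFinset_Ico {f : Fin (n + 1) → ℕ}
    (hf : f ∈ posAntidiagonalTuple (n + 1) k) :
    Fin.tail f ∈ Fintype.piFinset fun _ => Ico 1 k := by
  have hpos := (mem_posAntidiagonalTuple.1 hf).2
  have hsum := head_add_sum_tail_eq hf
  refine Fintype.mem_piFinset.2 fun l => mem_Ico.2 ⟨Nat.one_le_iff_ne_zero.2 (hpos _), ?_⟩
  have hhead := hpos 0
  have hle : Fin.tail f l ≤ ∑ l, Fin.tail f l :=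
    single_le_sum (fun _ _ => Nat.zero_le _) (mem_univ l)
  omega

theorem sum_prod_posAntidiagonalTuple_le {R : Type*} [CommSemiring R] [PartialOrder R]
    [IsOrderedRing R] {a : ℕ → R} (ha : ∀ j, 0 ≤ a j) {A : R}
    (hA : ∀ j, 1 ≤ j → a j ≤ A) :
    ∑ f ∈ posAntidiagonalTuple (n + 1) k, ∏ l, a (f l) ≤
      A * (∑ j ∈ Ico 1 k, a j) ^ n := by
  set T := posAntidiagonalTuple (n + 1) k
  have hA0 : 0 ≤ A := (ha 1).trans (hA 1 le_rfl)
  have htail_image : T.image Fin.tail ⊆ Fintype.piFinset fun _ => Ico 1 k := by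
    simpa only [image_subset_iff] using fun f hf => tail_mem_piFinset_Ico hf
  calc ∑ f ∈ T, ∏ l, a (f l)
      = ∑ f ∈ T, a (f 0) * ∏ l, a (Fin.tail f l) :=
        sum_congr rfl fun f _ => Fin.prod_univ_succ _
    _ ≤ ∑ f ∈ T, A * ∏ l, a (Fin.tail f l) := by
        refine sum_le_sum fun f hf => mul_le_mul_of_nonneg_right ?_ ?_
        · exact hA _ (Nat.one_le_iff_ne_zero.2 ((mem_posAntidiagonalTuple.1 hf).2 0))
        · exact prod_nonneg fun _ _ => ha _
    _ = A * ∑ t ∈ T.image Fin.tail, ∏ l, a (t l) := by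
        rw [← mul_sum, sum_image fun f hf g hg h => injOn_tail_posAntidiagonalTuple hf hg h]
    _ ≤ A * ∑ t ∈ Fintype.piFinset fun _ => Ico 1 k, ∏ l, a (t l) :=
        mul_le_mul_of_nonneg_left (sum_le_sum_of_subset_of_nonneg htail_image
          fun _ _ _ => prod_nonneg fun _ _ => ha _) hA0
    _ = A * (∑ j ∈ Ico 1 k, a j) ^ n := by
        rw [← prod_univ_sum, prod_const, card_univ, Fintype.card_fin]

end posAntidiagonalTuple

theorem sum_Ico_one_le_one_sub {a : ℕ → ℝ} (ha : ∀ j, 0 ≤ a j)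
    (hsum : HasSum (fun j : ℕ => a (j + 1)) 1) {k : ℕ} (hk : 1 ≤ k) :
    ∑ j ∈ Ico 1 k, a j ≤ 1 - a k := by
  have h := sum_le_hasSum (range k) (fun _ _ => ha _) hsum
  rw [range_eq_Ico, sum_Ico_add', zero_add, sum_Ico_succ_top hk] at h
  linarith

theorem stmt11_general (a : ℕ → ℝ) (ha : ∀ j, 0 ≤ a j)
    (hsum : HasSum (fun j : ℕ => a (j + 1)) 1)
    (k i : ℕ) (hk : 2 ≤ k) (hi2 : 2 ≤ i) :
    ∑ f ∈ (Finset.Nat.antidiagonalTuple i k).filter (fun f => ∀ l, f l ≠ 0),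
        ∏ l : Fin i, a (f l)
      ≤ (1 - a k) * (⨆ j : ℕ, a (j + 1)) := by
  obtain ⟨n, rfl⟩ : ∃ n, i = n + 2 := ⟨i - 2, by omega⟩
  have hbdd : BddAbove (Set.range fun j => a (j + 1)) :=
    ⟨1, Set.forall_mem_range.2 fun j => le_hasSum hsum j fun _ _ => ha _⟩
  have hA : ∀ j, 1 ≤ j → a j ≤ ⨆ j : ℕ, a (j + 1) := by
    intro j hj
    obtain ⟨j, rfl⟩ := Nat.exists_eq_add_of_le' hj
    exact le_ciSup hbdd j
  have hA0 : 0 ≤ ⨆ j : ℕ, a (j + 1) := (ha 1).trans (hA 1 le_rfl)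
  have hs := sum_Ico_one_le_one_sub ha hsum (by omega : 1 ≤ k)
  have hs0 : 0 ≤ ∑ j ∈ Ico 1 k, a j := sum_nonneg fun _ _ => ha _
  calc ∑ f ∈ posAntidiagonalTuple (n + 2) k, ∏ l, a (f l)
      ≤ (⨆ j : ℕ, a (j + 1)) * (∑ j ∈ Ico 1 k, a j) ^ (n + 1) :=
        sum_prod_posAntidiagonalTuple_le ha hA
    _ ≤ (⨆ j : ℕ, a (j + 1)) * (1 - a k) := by
        refine mul_le_mul_of_nonneg_left ?_ hA0
        exact (pow_le_of_le_one hs0 (by linarith [ha k]) n.succ_ne_zero).trans hs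
    _ = (1 - a k) * ⨆ j : ℕ, a (j + 1) := mul_comm _ _

/-- If `a₁, a₂, …` are nonnegative reals with `Σ aᵢ = 1` and `a = sup aᵢ`, then for any
`k ≥ 2` and `2 ≤ i ≤ k`, the sum of `a_{j₁}⋯a_{jᵢ}` over all `i`-tuples of positive
integers with `j₁+⋯+jᵢ = k` is at most `(1 - a_k)·a`. -/
theorem stmt11 (a : ℕ → ℝ) (ha : ∀ j, 0 ≤ a j)
    (hsum : HasSum (fun j : ℕ => a (j + 1)) 1)
    (k i : ℕ) (hk : 2 ≤ k) (hi2 : 2 ≤ i) (hik : i ≤ k) :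
    ∑ f ∈ (Finset.Nat.antidiagonalTuple i k).filter (fun f => ∀ l, f l ≠ 0),
        ∏ l : Fin i, a (f l)
      ≤ (1 - a k) * (⨆ j : ℕ, a (j + 1)) :=
  stmt11_general a ha hsum k i hk hi2
end

section
/- Let a₁, a₂, ... be nonnegative reals with Σ aᵢ = 1 and a = sup{aᵢ}. Then for any k ≥ 1 and 1 ≤ i ≤ k, Σ_{j₁+...+jᵢ=k, jₗ≥1} a_{j₁}⋯a_{jᵢ} ≤ a. -/
/-!
Bound the first factor `a_{j₁}` by `a`. The head of a tuple with sum `k` is determined by its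
tail, so the remaining products are indexed injectively by tails with entries in `1, …, k`; their
total is at most `(a₁ + ⋯ + a_k) ^ (i - 1) ≤ 1`.
-/

namespace Finset.Nat

theorem tail_injOn_antidiagonalTuple (n k : ℕ) :
    Set.InjOn (Fin.tail : (Fin (n + 1) → ℕ) → Fin n → ℕ) (antidiagonalTuple (n + 1) k) := by
  intro f hf g hg htail
  simp only [mem_coe, mem_antidiagonalTuple, Fin.sum_univ_succ] at hf hg
  have hsum_tail : ∑ l : Fin n, f l.succ = ∑ l : Fin n, g l.succ :=
    Finset.sum_congr rfl fun l _ => congrFun htail l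
  have hhead : f 0 = g 0 := by omega
  rw [← Fin.cons_self_tail f, ← Fin.cons_self_tail g, hhead, htail]

theorem tail_image_antidiagonalTuple_subset (n k : ℕ) :
    (antidiagonalTuple (n + 1) k).image Fin.tail ⊆
      Fintype.piFinset fun _ : Fin n => range (k + 1) := by
  intro g hg
  obtain ⟨f, hf, rfl⟩ := mem_image.mp hg
  rw [mem_antidiagonalTuple] at hf
  refine Fintype.mem_piFinset.mpr fun l => mem_range_succ_iff.mpr ?_
  exact hf ▸ single_le_sum (fun m _ => Nat.zero_le (f m)) (mem_univ l.succ)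

theorem sum_prod_antidiagonalTuple_le {R : Type*} [CommSemiring R] [PartialOrder R]
    [IsOrderedRing R] {b : ℕ → R} {M : R} (hb : ∀ j, 0 ≤ b j)
    (hM : ∀ j, b j ≤ M) (n k : ℕ) :
    ∑ f ∈ antidiagonalTuple (n + 1) k, ∏ l, b (f l)
      ≤ M * (∑ m ∈ range (k + 1), b m) ^ n := by
  have hM0 : 0 ≤ M := (hb 0).trans (hM 0)
  calc ∑ f ∈ antidiagonalTuple (n + 1) k, ∏ l, b (f l)
      ≤ ∑ f ∈ antidiagonalTuple (n + 1) k, M * ∏ l, b (Fin.tail f l) := by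
        refine sum_le_sum fun f _ => ?_
        rw [Fin.prod_univ_succ]
        exact mul_le_mul_of_nonneg_right (hM _) (prod_nonneg fun l _ => hb _)
    _ = M * ∑ g ∈ (antidiagonalTuple (n + 1) k).image Fin.tail, ∏ l, b (g l) := by
        rw [sum_image (tail_injOn_antidiagonalTuple n k), mul_sum]
    _ ≤ M * ∑ g ∈ Fintype.piFinset (fun _ : Fin n => range (k + 1)), ∏ l, b (g l) := by
        gcongr ?_ * ?_
        exact sum_le_sum_of_subset_of_nonneg (tail_image_antidiagonalTuple_subset n k)
          fun g _ _ => prod_nonneg fun l _ => hb _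
    _ = M * (∑ m ∈ range (k + 1), b m) ^ n := by
        rw [← prod_univ_sum, prod_const, card_univ, Fintype.card_fin]

end Finset.Nat

-- Setting `a 0 := 0` turns the restriction to tuples with positive entries into a plain sum.
theorem Finset.sum_filter_forall_ne_zero_prod {ι R : Type*} [Fintype ι] [CommSemiring R]
    [DecidablePred fun f : ι → ℕ => ∀ l, f l ≠ 0] (s : Finset (ι → ℕ)) (a : ℕ → R) :
    ∑ f ∈ s.filter (fun f => ∀ l, f l ≠ 0), ∏ l, a (f l)
      = ∑ f ∈ s, ∏ l, Function.update a 0 0 (f l) := by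
  rw [Finset.sum_filter]
  refine Finset.sum_congr rfl fun f _ => ?_
  split_ifs with hpos
  · exact Finset.prod_congr rfl fun l _ => (Function.update_of_ne (hpos l) _ _).symm
  · push Not at hpos
    obtain ⟨l, hl⟩ := hpos
    exact (Finset.prod_eq_zero (Finset.mem_univ l) (by simp [hl])).symm

theorem stmt12_general (a : ℕ → ℝ) (ha : ∀ j, 0 ≤ a j)
    (hsum : HasSum (fun j : ℕ => a (j + 1)) 1)
    (k i : ℕ) (hi1 : 1 ≤ i) :
    ∑ f ∈ (Finset.Nat.antidiagonalTuple i k).filter (fun f => ∀ l, f l ≠ 0),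
        ∏ l : Fin i, a (f l)
      ≤ ⨆ j : ℕ, a (j + 1) := by
  obtain ⟨n, rfl⟩ : ∃ n, i = n + 1 := ⟨i - 1, by omega⟩
  set b := Function.update a 0 0
  have hb_succ (j : ℕ) : b (j + 1) = a (j + 1) := Function.update_of_ne j.succ_ne_zero _ _
  have hb : ∀ j, 0 ≤ b j := by
    rintro (_ | j)
    · simp [b]
    · exact hb_succ j ▸ ha _
  have hbdd : BddAbove (Set.range fun j => a (j + 1)) :=
    ⟨1, by rintro _ ⟨j, rfl⟩; exact le_hasSum hsum j fun m _ => ha _⟩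
  have hb_le : ∀ j, b j ≤ ⨆ j : ℕ, a (j + 1) := by
    rintro (_ | j)
    · simpa [b] using (ha 1).trans (le_ciSup hbdd 0)
    · exact hb_succ j ▸ le_ciSup hbdd j
  have hpartial : ∑ m ∈ Finset.range (k + 1), b m ≤ 1 := by
    rw [Finset.sum_range_succ']
    simpa [hb_succ, b] using sum_le_hasSum (Finset.range k) (fun m _ => ha _) hsum
  rw [Finset.sum_filter_forall_ne_zero_prod]
  calc _ ≤ (⨆ j : ℕ, a (j + 1)) * (∑ m ∈ Finset.range (k + 1), b m) ^ n :=
        Finset.Nat.sum_prod_antidiagonalTuple_le hb hb_le n k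
    _ ≤ ⨆ j : ℕ, a (j + 1) :=
        mul_le_of_le_one_right ((hb 0).trans (hb_le 0))
          (pow_le_one₀ (Finset.sum_nonneg fun m _ => hb m) hpartial)

/-- If `a₁, a₂, …` are nonnegative reals with `Σ aᵢ = 1` and `a = sup aᵢ`, then for any
`k ≥ 1` and `1 ≤ i ≤ k`, the sum of `a_{j₁}⋯a_{jᵢ}` over all `i`-tuples of positive
integers with `j₁+⋯+jᵢ = k` is at most `a`. -/
theorem stmt12 (a : ℕ → ℝ) (ha : ∀ j, 0 ≤ a j)
    (hsum : HasSum (fun j : ℕ => a (j + 1)) 1)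
    (k i : ℕ) (hk : 1 ≤ k) (hi1 : 1 ≤ i) (hik : i ≤ k) :
    ∑ f ∈ (Finset.Nat.antidiagonalTuple i k).filter (fun f => ∀ l, f l ≠ 0),
        ∏ l : Fin i, a (f l)
      ≤ ⨆ j : ℕ, a (j + 1) :=
  stmt12_general a ha hsum k i hi1
end

section
/- Let p(t) be a power series with 0 ≤ a_k < 1, Σ a_k = 1, iterates p^[n], and coefficient bounds a^[n] = sup_{k≥1} a_k^[n]. For k ≥ 1 and n ∈ ℕ, one has a_k^[n+1] ≤ a^[n]·(1 - p(a₀^[n]))/(1 - a₀^[n]) ≤ a^[n]. -/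
open Filter Topology

/-- Coefficient of `t^k` in the composition `p ∘ q` of power series with coefficient
sequences `a` and `b`. -/
noncomputable def compCoeff (a b : ℕ → ℝ) (k : ℕ) : ℝ :=
  ∑' i : ℕ, a i * ∑ f ∈ Finset.Nat.antidiagonalTuple i k, ∏ l, b (f l)

/-- Coefficients of the iterates: `iterCoeff a (n-1) k = a_k^[n]`, with
`iterCoeff a 0 = a` the coefficients of `p^[1] = p`. -/
noncomputable def iterCoeff (a : ℕ → ℝ) : ℕ → ℕ → ℝ
  | 0 => a
  | n + 1 => compCoeff a (iterCoeff a n)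

namespace Stmt15Aux

/-- Abbreviation for the sum over antidiagonal tuples. -/
noncomputable def S (b : ℕ → ℝ) (i k : ℕ) : ℝ :=
  ∑ f ∈ Finset.Nat.antidiagonalTuple i k, ∏ l, b (f l)

lemma S_nonneg {b : ℕ → ℝ} (hb : ∀ t, 0 ≤ b t) (i k : ℕ) : 0 ≤ S b i k :=
  Finset.sum_nonneg fun f _ => Finset.prod_nonneg fun l _ => hb _

/-- Box lemma: any finite collection of tuples. -/
lemma box {b : ℕ → ℝ} (hb : ∀ t, 0 ≤ b t)
    (hps : ∀ N, ∑ t ∈ Finset.range N, b t ≤ 1) (i : ℕ) (T : Finset (Fin i → ℕ)) :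
    ∑ f ∈ T, ∏ l, b (f l) ≤ 1 := by
  set N : ℕ := (T.sup fun f => Finset.univ.sup f) + 1 with hN
  have hsub : T ⊆ Fintype.piFinset fun _ : Fin i => Finset.range N := by
    intro f hf
    rw [Fintype.mem_piFinset]
    intro l
    rw [Finset.mem_range, hN, Nat.lt_succ_iff]
    exact le_trans (Finset.le_sup (Finset.mem_univ l)) (Finset.le_sup hf)
  calc ∑ f ∈ T, ∏ l, b (f l)
      ≤ ∑ f ∈ Fintype.piFinset fun _ : Fin i => Finset.range N, ∏ l, b (f l) := by
        refine Finset.sum_le_sum_of_subset_of_nonneg hsub fun f _ _ => ?_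
        exact Finset.prod_nonneg fun l _ => hb _
    _ = ∏ _l : Fin i, ∑ t ∈ Finset.range N, b t := by
        rw [Finset.prod_univ_sum]
    _ = (∑ t ∈ Finset.range N, b t) ^ i := by
        rw [Finset.prod_const, Finset.card_univ, Fintype.card_fin]
    _ ≤ 1 := pow_le_one₀ (Finset.sum_nonneg fun t _ => hb t) (hps N)

lemma S_le_one {b : ℕ → ℝ} (hb : ∀ t, 0 ≤ b t)
    (hps : ∀ N, ∑ t ∈ Finset.range N, b t ≤ 1) (i k : ℕ) : S b i k ≤ 1 :=
  box hb hps i _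

lemma sum_S_le_one {b : ℕ → ℝ} (hb : ∀ t, 0 ≤ b t)
    (hps : ∀ N, ∑ t ∈ Finset.range N, b t ≤ 1) (i K : ℕ) :
    ∑ k ∈ Finset.range K, S b i k ≤ 1 := by
  have hdisj : (↑(Finset.range K) : Set ℕ).PairwiseDisjoint
      fun k => Finset.Nat.antidiagonalTuple i k := by
    intro x _ y _ hxy
    simp only [Finset.disjoint_left]
    intro f hfx hfy
    rw [Finset.Nat.mem_antidiagonalTuple] at hfx hfy
    exact hxy (hfx ▸ hfy)
  have := Finset.sum_biUnion (s := Finset.range K)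
    (t := fun k => Finset.Nat.antidiagonalTuple i k) (f := fun f => ∏ l, b (f l)) hdisj
  calc ∑ k ∈ Finset.range K, S b i k
      = ∑ f ∈ (Finset.range K).biUnion fun k => Finset.Nat.antidiagonalTuple i k,
          ∏ l, b (f l) := (this).symm
    _ ≤ 1 := box hb hps i _

/-- Recursion for `S`. -/
lemma S_succ (b : ℕ → ℝ) (i k : ℕ) :
    S b (i + 1) k = ∑ m ∈ Finset.range (k + 1), b m * S b i (k - m) := by
  have h1 : ∑ m ∈ Finset.range (k + 1), b m * S b i (k - m)
      = ∑ p ∈ Finset.HasAntidiagonal.antidiagonal k,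
          ∑ g ∈ Finset.Nat.antidiagonalTuple i p.2, b p.1 * ∏ l, b (g l) := by
    rw [← Finset.Nat.sum_antidiagonal_eq_sum_range_succ_mk
      (f := fun p : ℕ × ℕ => b p.1 * S b i p.2)]
    exact Finset.sum_congr rfl fun p _ => by rw [S, Finset.mul_sum]
  rw [h1, Finset.sum_sigma' (Finset.HasAntidiagonal.antidiagonal k)
    (fun p => Finset.Nat.antidiagonalTuple i p.2) (fun p g => b p.1 * ∏ l, b (g l)), S]
  refine (Finset.sum_bij (fun x _ => Fin.cons x.1.1 x.2) ?_ ?_ ?_ ?_).symm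
  · rintro ⟨⟨m, k'⟩, g⟩ hx
    simp only [Finset.mem_sigma, Finset.HasAntidiagonal.mem_antidiagonal,
      Finset.Nat.mem_antidiagonalTuple] at hx
    rw [Finset.Nat.mem_antidiagonalTuple, Fin.sum_cons]
    rw [hx.2]
    exact hx.1
  · rintro ⟨⟨m, k'⟩, g⟩ hx ⟨⟨m', k''⟩, g'⟩ hx' heq
    simp only [Finset.mem_sigma, Finset.HasAntidiagonal.mem_antidiagonal,
      Finset.Nat.mem_antidiagonalTuple] at hx hx'
    simp only at hx hx' heq
    have h1 : m = m' := by
      have := congrFun heq 0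
      simpa using this
    have h2 : g = g' := by
      funext l
      have := congrFun heq l.succ
      simpa using this
    subst h1; subst h2
    have : k' = k'' := by omega
    subst this
    rfl
  · intro f hf
    rw [Finset.Nat.mem_antidiagonalTuple] at hf
    refine ⟨⟨⟨f 0, ∑ l : Fin i, f l.succ⟩, Fin.tail f⟩, ?_, Fin.cons_self_tail f⟩
    simp only [Finset.mem_sigma, Finset.HasAntidiagonal.mem_antidiagonal,
      Finset.Nat.mem_antidiagonalTuple]
    refine ⟨by rw [← hf, Fin.sum_univ_succ], ?_⟩
    rfl
  · rintro ⟨⟨m, k'⟩, g⟩ hx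
    simp only
    rw [Fin.prod_univ_succ]
    simp

/-- Core estimate: for `k ≥ 1`,
`S b i k ≤ M * (1 + b₀ + ... + b₀^(i-1))` where `M` bounds all `b m`, `m ≥ 1`. -/
lemma S_le_core {b : ℕ → ℝ} (hb : ∀ t, 0 ≤ b t)
    (hps : ∀ N, ∑ t ∈ Finset.range N, b t ≤ 1)
    {M : ℝ} (hM0 : 0 ≤ M) (hM : ∀ m, 1 ≤ m → b m ≤ M) :
    ∀ i k, 1 ≤ k → S b i k ≤ M * ∑ j ∈ Finset.range i, (b 0) ^ j := by
  intro i
  induction i with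
  | zero =>
    intro k hk
    obtain ⟨k', rfl⟩ := Nat.exists_eq_add_of_le hk
    rw [S]
    rw [show 1 + k' = k' + 1 by omega, Finset.Nat.antidiagonalTuple_zero_succ]
    simp
  | succ i ih =>
    intro k hk
    rw [S_succ, Finset.sum_range_succ']
    have h1 : b 0 * S b i (k - 0) ≤ b 0 * (M * ∑ j ∈ Finset.range i, (b 0) ^ j) :=
      mul_le_mul_of_nonneg_left (ih k hk) (hb 0)
    have h2 : ∑ m ∈ Finset.range k, b (m + 1) * S b i (k - (m + 1))
        ≤ M * 1 := by
      calc ∑ m ∈ Finset.range k, b (m + 1) * S b i (k - (m + 1))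
          ≤ ∑ m ∈ Finset.range k, M * S b i (k - (m + 1)) := by
            refine Finset.sum_le_sum fun m _ => ?_
            exact mul_le_mul_of_nonneg_right (hM (m + 1) le_add_self) (S_nonneg hb _ _)
        _ = M * ∑ m ∈ Finset.range k, S b i (k - (m + 1)) := by rw [Finset.mul_sum]
        _ ≤ M * 1 := by
            refine mul_le_mul_of_nonneg_left ?_ hM0
            have : ∑ m ∈ Finset.range k, S b i (k - (m + 1))
                = ∑ m ∈ Finset.range k, S b i m := by
              rw [← Finset.sum_range_reflect]
              refine Finset.sum_congr rfl fun m hm => ?_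
              rw [Finset.mem_range] at hm
              congr 1
              omega
            rw [this]
            exact sum_S_le_one hb hps i k
    calc ∑ m ∈ Finset.range k, b (m + 1) * S b i (k - (m + 1)) + b 0 * S b i (k - 0)
        ≤ M * 1 + b 0 * (M * ∑ j ∈ Finset.range i, (b 0) ^ j) := add_le_add h2 h1
      _ = M * ∑ j ∈ Finset.range (i + 1), (b 0) ^ j := by
          rw [geom_sum_succ]; ring

lemma b_le_one {b : ℕ → ℝ} (hb : ∀ t, 0 ≤ b t)
    (hps : ∀ N, ∑ t ∈ Finset.range N, b t ≤ 1) (t : ℕ) : b t ≤ 1 := by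
  calc b t ≤ ∑ u ∈ Finset.range (t + 1), b u :=
        Finset.single_le_sum (fun u _ => hb u) (Finset.self_mem_range_succ t)
    _ ≤ 1 := hps (t + 1)

/-- Basic properties that propagate through the iteration. -/
lemma iter_good (a : ℕ → ℝ) (ha0 : ∀ k, 0 ≤ a k) (ha1 : ∀ k, a k < 1)
    (hsum : HasSum a 1) (n : ℕ) :
    (∀ t, 0 ≤ iterCoeff a n t) ∧
    (∀ N, ∑ t ∈ Finset.range N, iterCoeff a n t ≤ 1) ∧
    iterCoeff a n 0 < 1 := by
  have hsa : Summable a := hsum.summable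
  induction n with
  | zero =>
    refine ⟨ha0, fun N => ?_, ha1 0⟩
    calc ∑ t ∈ Finset.range N, a t ≤ ∑' t, a t :=
        Summable.sum_le_tsum _ (fun t _ => ha0 t) hsa
      _ = 1 := hsum.tsum_eq
  | succ n ih =>
    obtain ⟨hb, hps, hb0⟩ := ih
    set b := iterCoeff a n with hbdef
    have hiter : iterCoeff a (n + 1) = compCoeff a b := rfl
    have hSub : ∀ i k, S b i k ≤ 1 := S_le_one hb hps
    have hSnn : ∀ i k, 0 ≤ S b i k := S_nonneg hb
    have hsummand : ∀ k, Summable fun i => a i * S b i k := by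
      intro k
      refine Summable.of_nonneg_of_le (fun i => mul_nonneg (ha0 i) (hSnn i k))
        (fun i => ?_) hsa
      calc a i * S b i k ≤ a i * 1 := mul_le_mul_of_nonneg_left (hSub i k) (ha0 i)
        _ = a i := mul_one _
    have hnn : ∀ t, 0 ≤ iterCoeff a (n + 1) t := by
      intro t
      rw [hiter]
      exact tsum_nonneg fun i => mul_nonneg (ha0 i) (hSnn i t)
    refine ⟨hnn, ?_, ?_⟩
    · intro N
      have hswap : ∑ k ∈ Finset.range N, compCoeff a b k
          = ∑' i, ∑ k ∈ Finset.range N, a i * S b i k :=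
        (Summable.tsum_finsetSum fun k _ => hsummand k).symm
      rw [hiter, hswap]
      have : ∀ i, ∑ k ∈ Finset.range N, a i * S b i k ≤ a i := by
        intro i
        rw [← Finset.mul_sum]
        calc a i * ∑ k ∈ Finset.range N, S b i k ≤ a i * 1 :=
            mul_le_mul_of_nonneg_left (sum_S_le_one hb hps i N) (ha0 i)
          _ = a i := mul_one _
      calc ∑' i, ∑ k ∈ Finset.range N, a i * S b i k ≤ ∑' i, a i := by
            refine Summable.tsum_le_tsum this ?_ hsa
            refine Summable.of_nonneg_of_le
              (fun i => Finset.sum_nonneg fun k _ => mul_nonneg (ha0 i) (hSnn i k))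
              this hsa
        _ = 1 := hsum.tsum_eq
    · -- constant term < 1
      have hconst : iterCoeff a (n + 1) 0 = ∑' i, a i * (b 0) ^ i := by
        show (∑' i, a i * S b i 0) = _
        refine tsum_congr fun i => ?_
        rw [S, Finset.Nat.antidiagonalTuple_zero_right, Finset.sum_singleton]
        congr 1
        rw [show ∏ l : Fin i, b ((0 : Fin i → ℕ) l) = ∏ _l : Fin i, b 0 from rfl,
          Finset.prod_const, Finset.card_univ, Fintype.card_fin]
      rw [hconst]
      -- find i₀ ≥ 1 with a i₀ > 0
      have hb00 : 0 ≤ b 0 := hb 0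
      obtain ⟨i₀, hi₀, hai₀⟩ : ∃ i, i ≠ 0 ∧ 0 < a i := by
        by_contra h
        push_neg at h
        have : ∀ i ≠ 0, a i = 0 := fun i hi => le_antisymm (h i hi) (ha0 i)
        have h1 : HasSum a (a 0) := hasSum_single 0 this
        have := h1.unique hsum
        exact absurd this (ne_of_lt (ha1 0))
      have hle : ∀ i, a i * (b 0) ^ i ≤ a i := by
        intro i
        calc a i * (b 0) ^ i ≤ a i * 1 :=
            mul_le_mul_of_nonneg_left (pow_le_one₀ hb00 (b_le_one hb hps 0)) (ha0 i)
          _ = a i := mul_one _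
      have hlt : a i₀ * (b 0) ^ i₀ < a i₀ := by
        have h2 : (b 0) ^ i₀ < 1 := pow_lt_one₀ hb00 hb0 hi₀
        have := mul_lt_mul_of_pos_left h2 hai₀
        rwa [mul_one] at this
      have hsf : Summable fun i => a i * (b 0) ^ i :=
        Summable.of_nonneg_of_le (fun i => mul_nonneg (ha0 i) (pow_nonneg hb00 i)) hle hsa
      calc ∑' i, a i * (b 0) ^ i < ∑' i, a i := Summable.tsum_lt_tsum hle hlt hsf hsa
        _ = 1 := hsum.tsum_eq

/-- `p` is monotone on `[0,1]` (applied to the tsum representation). -/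
lemma p_mono (a : ℕ → ℝ) (ha0 : ∀ k, 0 ≤ a k) (hsa : Summable a)
    {s t : ℝ} (hs : 0 ≤ s) (hst : s ≤ t) (ht : t ≤ 1) :
    ∑' i, a i * s ^ i ≤ ∑' i, a i * t ^ i := by
  have ht0 : 0 ≤ t := le_trans hs hst
  refine Summable.tsum_le_tsum (fun i => ?_) ?_ ?_
  · exact mul_le_mul_of_nonneg_left (pow_le_pow_left₀ hs hst i) (ha0 i)
  · refine Summable.of_nonneg_of_le (fun i => mul_nonneg (ha0 i) (pow_nonneg hs i))
      (fun i => ?_) hsa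
    calc a i * s ^ i ≤ a i * 1 :=
        mul_le_mul_of_nonneg_left (pow_le_one₀ hs (le_trans hst ht)) (ha0 i)
      _ = a i := mul_one _
  · refine Summable.of_nonneg_of_le (fun i => mul_nonneg (ha0 i) (pow_nonneg ht0 i))
      (fun i => ?_) hsa
    calc a i * t ^ i ≤ a i * 1 :=
        mul_le_mul_of_nonneg_left (pow_le_one₀ ht0 ht) (ha0 i)
      _ = a i := mul_one _

/-- The constant terms satisfy `s_n ≤ p(s_n)`. -/
lemma const_le_p (a : ℕ → ℝ) (ha0 : ∀ k, 0 ≤ a k) (ha1 : ∀ k, a k < 1)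
    (hsum : HasSum a 1) (n : ℕ) :
    iterCoeff a n 0 ≤ ∑' i, a i * (iterCoeff a n 0) ^ i := by
  have hsa : Summable a := hsum.summable
  have hconst : ∀ m, iterCoeff a (m + 1) 0 = ∑' i, a i * (iterCoeff a m 0) ^ i := by
    intro m
    show (∑' i, a i * S (iterCoeff a m) i 0) = _
    refine tsum_congr fun i => ?_
    rw [S, Finset.Nat.antidiagonalTuple_zero_right, Finset.sum_singleton]
    congr 1
    rw [show ∏ l : Fin i, iterCoeff a m ((0 : Fin i → ℕ) l)
        = ∏ _l : Fin i, iterCoeff a m 0 from rfl,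
      Finset.prod_const, Finset.card_univ, Fintype.card_fin]
  induction n with
  | zero =>
    have hsumm : Summable fun i => a i * (a 0) ^ i :=
      Summable.of_nonneg_of_le (fun i => mul_nonneg (ha0 i) (pow_nonneg (ha0 0) i))
        (fun i => by
          calc a i * (a 0) ^ i ≤ a i * 1 :=
              mul_le_mul_of_nonneg_left (pow_le_one₀ (ha0 0) (le_of_lt (ha1 0))) (ha0 i)
            _ = a i := mul_one _) hsa
    have := Summable.le_tsum hsumm 0 fun i _ => mul_nonneg (ha0 i) (pow_nonneg (ha0 0) i)
    show a 0 ≤ ∑' i, a i * (a 0) ^ i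
    simpa using this
  | succ n ih =>
    obtain ⟨hbn, hpsn, hb0n⟩ := iter_good a ha0 ha1 hsum n
    obtain ⟨hbn1, hpsn1, hb0n1⟩ := iter_good a ha0 ha1 hsum (n + 1)
    have key : iterCoeff a n 0 ≤ iterCoeff a (n + 1) 0 := by
      rw [hconst n]; exact ih
    calc iterCoeff a (n + 1) 0 = ∑' i, a i * (iterCoeff a n 0) ^ i := hconst n
      _ ≤ ∑' i, a i * (iterCoeff a (n + 1) 0) ^ i :=
        p_mono a ha0 hsa (hbn 0) key (le_of_lt hb0n1)

end Stmt15Aux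

open Stmt15Aux in
/-- For `p(t) = Σ a_k t^k` with `0 ≤ a_k < 1` and `Σ a_k = 1`, with
`a^[n] = sup_{k≥1} a_k^[n]` and `a₀^[n]` the constant term of the `n`-th iterate:
for all `k ≥ 1`, `a_k^[n+1] ≤ a^[n]·(1 - p(a₀^[n]))/(1 - a₀^[n]) ≤ a^[n]`. -/
theorem stmt15 (a : ℕ → ℝ) (ha0 : ∀ k, 0 ≤ a k) (ha1 : ∀ k, a k < 1)
    (hsum : HasSum a 1) (k : ℕ) (hk : 1 ≤ k) (n : ℕ) :
    iterCoeff a (n + 1) k ≤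
      (⨆ j : ℕ, iterCoeff a n (j + 1)) *
        ((1 - ∑' i : ℕ, a i * (iterCoeff a n 0) ^ i) / (1 - iterCoeff a n 0)) ∧
    (⨆ j : ℕ, iterCoeff a n (j + 1)) *
        ((1 - ∑' i : ℕ, a i * (iterCoeff a n 0) ^ i) / (1 - iterCoeff a n 0)) ≤
      ⨆ j : ℕ, iterCoeff a n (j + 1) := by
  have hsa : Summable a := hsum.summable
  obtain ⟨hb, hps, hb0⟩ := iter_good a ha0 ha1 hsum n
  set b := iterCoeff a n with hbdef
  set s : ℝ := b 0 with hsdef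
  set M : ℝ := ⨆ j : ℕ, b (j + 1) with hMdef
  set P : ℝ := ∑' i : ℕ, a i * s ^ i with hPdef
  have hs0 : 0 ≤ s := hb 0
  have hs1 : s < 1 := hb0
  have hsne : s ≠ 1 := ne_of_lt hs1
  have h1s : 0 < 1 - s := by linarith
  -- M facts
  have hbdd : BddAbove (Set.range fun j : ℕ => b (j + 1)) :=
    ⟨1, by rintro x ⟨j, rfl⟩; exact b_le_one hb hps (j + 1)⟩
  have hM : ∀ m, 1 ≤ m → b m ≤ M := by
    intro m hm
    obtain ⟨j, rfl⟩ := Nat.exists_eq_add_of_le hm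
    rw [show 1 + j = j + 1 by omega]
    exact le_ciSup hbdd j
  have hM0 : 0 ≤ M := le_trans (hb 1) (hM 1 le_rfl)
  -- s ≤ P
  have hsP : s ≤ P := const_le_p a ha0 ha1 hsum n
  constructor
  · -- main estimate
    have hiter : iterCoeff a (n + 1) k = ∑' i, a i * S b i k := rfl
    have hSnn := S_nonneg hb
    have hSub := S_le_one hb hps
    have hcore := S_le_core hb hps hM0 hM
    -- the dominating sequence
    have heq : ∀ i : ℕ, a i * (M * ∑ j ∈ Finset.range i, s ^ j)
        = (M * (1 - s)⁻¹) * (a i - a i * s ^ i) := by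
      intro i
      rw [geom_sum_eq hsne]
      have hne : s - 1 ≠ 0 := by intro h; apply hsne; linarith
      have hne' : 1 - s ≠ 0 := ne_of_gt h1s
      field_simp
      ring
    have hPsummable : Summable fun i => a i * s ^ i := by
      refine Summable.of_nonneg_of_le (fun i => mul_nonneg (ha0 i) (pow_nonneg hs0 i))
        (fun i => ?_) hsa
      calc a i * s ^ i ≤ a i * 1 :=
          mul_le_mul_of_nonneg_left (pow_le_one₀ hs0 (le_of_lt hs1)) (ha0 i)
        _ = a i := mul_one _
    have hdom_summable : Summable fun i => a i * (M * ∑ j ∈ Finset.range i, s ^ j) := by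
      simp only [heq]
      exact ((hsa.sub hPsummable).mul_left _)
    have hdom_tsum : ∑' i, a i * (M * ∑ j ∈ Finset.range i, s ^ j)
        = M * ((1 - P) / (1 - s)) := by
      simp only [heq]
      rw [tsum_mul_left, Summable.tsum_sub hsa hPsummable, hsum.tsum_eq, ← hPdef, div_eq_mul_inv]
      ring
    rw [hiter, ← hdom_tsum]
    refine Summable.tsum_le_tsum (fun i => ?_) ?_ hdom_summable
    · exact mul_le_mul_of_nonneg_left (hcore i k hk) (ha0 i)
    · refine Summable.of_nonneg_of_le (fun i => mul_nonneg (ha0 i) (hSnn i k))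
        (fun i => ?_) hsa
      calc a i * S b i k ≤ a i * 1 := mul_le_mul_of_nonneg_left (hSub i k) (ha0 i)
        _ = a i := mul_one _
  · -- ratio ≤ 1
    refine mul_le_of_le_one_right hM0 ?_
    rw [div_le_one h1s]
    linarith
end

section
/- Let r > 1 be an integer, G a finite group, x an element of the simplex S ⊂ R[G], and for the map x ↦ x^r consider Cesàro averages q^(n)(x) = (1/n) Σ_{i=1}^n x^{r^i}. Let (m₀, ..., m_{d-1}) be the eventually repeating part of the sequence (r^n mod m_x). Then q^(n)(x) converges to (1/d) Σ_{i=0}^{d-1} x^{m_i} c_x as n → ∞. -/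
/-!
Put `z = x ^ m_x`, a probability vector on `G_x`. Some power `z ^ K` charges every element of
`G_x`: the elements reached by powers of `x ^ (n_x m_x)`, which charges `1`, form a submonoid,
hence a subgroup, containing `Supp(x ^ n_x)`. So `z ^ K ≥ δ c_x` (Doeblin), and convolving a
zero-sum element supported on `G_x` with `z ^ K` shrinks it by `1 - δ`; hence `z ^ t → c_x`
geometrically and `x ^ e - x ^ (e mod m_x) c_x → 0`. Along `e = r ^ j` the residues are eventually
`d`-periodic, and Cesàro averages of a sequence asymptotic to a `d`-periodic one converge to the
mean over a period.
-/

open Filter Topology Finset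

section Cesaro

variable {E : Type*} [NormedAddCommGroup E] [NormedSpace ℝ E]

theorem Function.Periodic.tendsto_cesaro {f : ℕ → E} {d : ℕ} (hf : Function.Periodic f d)
    (hd : 0 < d) :
    Tendsto (fun N : ℕ => (N : ℝ)⁻¹ • ∑ j ∈ range N, f j) atTop
      (𝓝 ((d : ℝ)⁻¹ • ∑ j ∈ range d, f j)) := by
  set μ : E := (d : ℝ)⁻¹ • ∑ j ∈ range d, f j
  set err : ℕ → E := fun N => ∑ j ∈ range N, f j - (N : ℝ) • μ
  -- a full period contributes exactly `d • μ`, so the error term is itself periodic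
  have herr : Function.Periodic err d := fun N => by
    have hd0 : (d : ℝ) ≠ 0 := by positivity
    have hdμ : (d : ℝ) • μ = ∑ j ∈ range d, f j := by
      rw [smul_inv_smul₀ hd0]
    have hshift : ∑ j ∈ range N, f (d + j) = ∑ j ∈ range N, f j :=
      sum_congr rfl fun j _ => by rw [add_comm, hf]
    simp only [err]
    rw [add_comm N d, sum_range_add, hshift, Nat.cast_add, add_smul, hdμ]
    abel
  set C : ℝ := ∑ k ∈ range d, ‖err k‖
  have hC : ∀ N, ‖err N‖ ≤ C := fun N => by
    rw [← herr.map_mod_nat N]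
    exact single_le_sum (f := fun k => ‖err k‖) (fun _ _ => norm_nonneg _)
      (mem_range.mpr (Nat.mod_lt N hd))
  have hsmall : Tendsto (fun N : ℕ => (N : ℝ)⁻¹ • err N) atTop (𝓝 0) := by
    refine squeeze_zero_norm (fun N => ?_) (tendsto_const_div_atTop_nhds_zero_nat C)
    rw [norm_smul, norm_inv, Real.norm_natCast, ← div_eq_inv_mul]
    exact div_le_div_of_nonneg_right (hC N) (Nat.cast_nonneg N)
  have hlim := hsmall.const_add μ
  rw [add_zero] at hlim
  refine hlim.congr' ?_
  filter_upwards [eventually_ne_atTop 0] with N hN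
  have hN0 : (N : ℝ) ≠ 0 := Nat.cast_ne_zero.mpr hN
  simp only [err, smul_sub, inv_smul_smul₀ hN0]
  abel

theorem tendsto_cesaro_of_tendsto_sub_periodic {b f : ℕ → E} {d : ℕ}
    (hf : Function.Periodic f d) (hd : 0 < d) (hb : Tendsto (fun j => b j - f j) atTop (𝓝 0)) :
    Tendsto (fun N : ℕ => (N : ℝ)⁻¹ • ∑ j ∈ range N, b j) atTop
      (𝓝 ((d : ℝ)⁻¹ • ∑ j ∈ range d, f j)) := by
  have h := hb.cesaro_smul.add (hf.tendsto_cesaro hd)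
  rw [zero_add] at h
  refine h.congr fun N => ?_
  rw [sum_sub_distrib, smul_sub, sub_add_cancel]

open Fin.NatCast in
theorem tendsto_cesaro_of_tendsto_sub_natCast {d : ℕ} [NeZero d] {b : ℕ → E} (L : Fin d → E)
    (hb : Tendsto (fun j => b j - L j) atTop (𝓝 0)) :
    Tendsto (fun N : ℕ => (N : ℝ)⁻¹ • ∑ j ∈ range N, b j) atTop
      (𝓝 ((d : ℝ)⁻¹ • ∑ i, L i)) := by
  have hper : Function.Periodic (fun j : ℕ => L j) d := fun j => by simp
  have h := tendsto_cesaro_of_tendsto_sub_periodic hper (Nat.pos_of_neZero d) hb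
  rwa [← Fin.sum_univ_eq_sum_range (fun j => L j), Finset.sum_congr rfl fun i _ =>
    congrArg L (Fin.cast_val_eq_self i)] at h

end Cesaro

namespace MonoidAlgebra

variable {R G : Type*} [Group G] [Fintype G]

section Semiring

variable [Semiring R]

theorem coeff_mul_eq_sum_s19 (x y : MonoidAlgebra R G) (g : G) :
    (x * y).coeff g = ∑ a, x.coeff a * y.coeff (a⁻¹ * g) := by
  rw [coeff_mul_apply_left, Finsupp.sum_fintype]
  simp

theorem coeff_mul_eq_sum' (x y : MonoidAlgebra R G) (g : G) :
    (x * y).coeff g = ∑ b, x.coeff (g * b⁻¹) * y.coeff b := by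
  rw [coeff_mul_apply_right, Finsupp.sum_fintype]
  simp

theorem sum_coeff_mul (x y : MonoidAlgebra R G) :
    ∑ g, (x * y).coeff g = (∑ g, x.coeff g) * ∑ g, y.coeff g := by
  simp only [coeff_mul_eq_sum_s19, sum_mul_sum]
  rw [sum_comm]
  refine sum_congr rfl fun a _ => ?_
  exact Fintype.sum_equiv (Equiv.mulLeft a⁻¹) _ _ fun _ => rfl

end Semiring

section Real

variable (G) in
def simplex : Submonoid (MonoidAlgebra ℝ G) where
  carrier := {x | (∀ g, 0 ≤ x.coeff g) ∧ ∑ g, x.coeff g = 1}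
  mul_mem' {x y} hx hy := ⟨fun g => by
      rw [coeff_mul_eq_sum_s19]
      exact sum_nonneg fun a _ => mul_nonneg (hx.1 a) (hy.1 _),
    by rw [sum_coeff_mul, hx.2, hy.2, one_mul]⟩
  one_mem' := ⟨fun g => by
      classical
      rw [one_def, coeff_single, Finsupp.single_apply]
      split_ifs <;> norm_num,
    by simp [one_def]⟩

variable {x y : MonoidAlgebra ℝ G}

theorem coeff_le_one_of_mem_simplex (hx : x ∈ simplex G) (g : G) : x.coeff g ≤ 1 :=
  hx.2 ▸ single_le_sum (fun a _ => hx.1 a) (mem_univ g)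

theorem coeff_mul_coeff_le_coeff_mul (hx : x ∈ simplex G) (hy : y ∈ simplex G) (a b : G) :
    x.coeff a * y.coeff b ≤ (x * y).coeff (a * b) := by
  have h := single_le_sum (fun i _ => mul_nonneg (hx.1 i) (hy.1 (i⁻¹ * (a * b))))
    (mem_univ a)
  rwa [inv_mul_cancel_left, ← coeff_mul_eq_sum_s19] at h

theorem abs_coeff_mul_le_mul_sum_left {v : MonoidAlgebra ℝ G} {M : ℝ}
    (hx : ∀ g, 0 ≤ x.coeff g) (hv : ∀ a, |v.coeff a| ≤ M) (g : G) :
    |(x * v).coeff g| ≤ M * ∑ a, x.coeff a := by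
  rw [coeff_mul_eq_sum_s19, mul_sum]
  refine (abs_sum_le_sum_abs _ _).trans (sum_le_sum fun a _ => ?_)
  rw [abs_mul, abs_of_nonneg (hx a), mul_comm]
  exact mul_le_mul_of_nonneg_right (hv _) (hx a)

theorem abs_coeff_mul_le_mul_sum_right {v : MonoidAlgebra ℝ G} {M : ℝ}
    (hv : ∀ a, |v.coeff a| ≤ M) (hy : ∀ g, 0 ≤ y.coeff g) (g : G) :
    |(v * y).coeff g| ≤ M * ∑ b, y.coeff b := by
  rw [coeff_mul_eq_sum', mul_sum]
  refine (abs_sum_le_sum_abs _ _).trans (sum_le_sum fun b _ => ?_)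
  rw [abs_mul, abs_of_nonneg (hy b)]
  exact mul_le_mul_of_nonneg_right (hv _) (hy b)

theorem coeff_pow_add_mul_pos (hy : y ∈ simplex G) {j k : ℕ} {a b : G}
    (ha : 0 < (y ^ j).coeff a) (hb : 0 < (y ^ k).coeff b) : 0 < (y ^ (j + k)).coeff (a * b) :=
  (mul_pos ha hb).trans_le
    (pow_add y j k ▸ coeff_mul_coeff_le_coeff_mul (pow_mem hy j) (pow_mem hy k) a b)

end Real

section Supported

variable (R) [CommSemiring R]

noncomputable def supportedIn (H : Subgroup G) : Subalgebra R (MonoidAlgebra R G) :=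
  (supported R R (H : Set G)).toSubalgebra
    (mem_supported'.mpr fun g hg => by
      classical
      rw [one_def, coeff_single, Finsupp.single_apply,
        if_neg fun h : 1 = g => hg (h ▸ H.one_mem)])
    fun x y hx hy => mem_supported'.mpr fun g hg => by
      rw [coeff_mul_eq_sum_s19]
      refine sum_eq_zero fun a _ => ?_
      by_cases ha : a ∈ H
      · rw [mem_supported'.mp hy _ fun h => hg (by simpa using H.mul_mem ha h), mul_zero]
      · rw [mem_supported'.mp hx a ha, zero_mul]

variable {R}

theorem mem_supportedIn {H : Subgroup G} {x : MonoidAlgebra R G} :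
    x ∈ supportedIn R H ↔ ∀ g ∉ H, x.coeff g = 0 :=
  mem_supported'

end Supported

section Average

variable (H : Subgroup G)

open scoped Classical in
noncomputable def avg : MonoidAlgebra ℝ G :=
  (Nat.card H : ℝ)⁻¹ • ∑ g ∈ univ.filter (· ∈ H), single g (1 : ℝ)

open scoped Classical in
theorem coeff_avg (g : G) : (avg H).coeff g = if g ∈ H then (Nat.card H : ℝ)⁻¹ else 0 := by
  simp only [avg, coeff_smul_apply, coeff_sum, coeff_single, Finsupp.coe_finsetSum,
    Finset.sum_apply, Finsupp.single_apply, sum_ite_eq', mem_filter, mem_univ, true_and]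
  split_ifs <;> simp

theorem avg_mem_supportedIn : avg H ∈ supportedIn ℝ H :=
  mem_supportedIn.mpr fun g hg => by rw [coeff_avg, if_neg hg]

theorem avg_mem_simplex : avg H ∈ simplex G := by
  classical
  refine ⟨fun g => ?_, ?_⟩
  · rw [coeff_avg]
    split_ifs <;> positivity
  · simp only [coeff_avg, ← sum_filter, sum_const, nsmul_eq_mul]
    rw [← Fintype.card_subtype, ← Nat.card_eq_fintype_card]
    exact mul_inv_cancel₀ (Nat.cast_ne_zero.mpr Nat.card_pos.ne')

variable {H}

theorem coeff_avg_mul_left {a : G} (ha : a ∈ H) (t : G) :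
    (avg H).coeff (a * t) = (avg H).coeff t := by
  classical
  simp only [coeff_avg, H.mul_mem_cancel_left ha]

theorem coeff_avg_mul_right {a : G} (ha : a ∈ H) (t : G) :
    (avg H).coeff (t * a) = (avg H).coeff t := by
  classical
  simp only [coeff_avg, H.mul_mem_cancel_right ha]

theorem mul_avg {u : MonoidAlgebra ℝ G} (hu : u ∈ supportedIn ℝ H) :
    u * avg H = (∑ g, u.coeff g) • avg H := by
  ext t
  rw [coeff_smul_apply, smul_eq_mul, coeff_mul_eq_sum_s19, sum_mul]
  refine sum_congr rfl fun a _ => ?_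
  by_cases ha : a ∈ H
  · rw [coeff_avg_mul_left (H.inv_mem ha)]
  · rw [mem_supportedIn.mp hu a ha, zero_mul, zero_mul]

theorem avg_mul {u : MonoidAlgebra ℝ G} (hu : u ∈ supportedIn ℝ H) :
    avg H * u = (∑ g, u.coeff g) • avg H := by
  ext t
  rw [coeff_smul_apply, smul_eq_mul, coeff_mul_eq_sum', sum_mul]
  refine sum_congr rfl fun b _ => ?_
  by_cases hb : b ∈ H
  · rw [coeff_avg_mul_right (H.inv_mem hb), mul_comm]
  · rw [mem_supportedIn.mp hu b hb, mul_zero, zero_mul]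

end Average

section Convergence

variable {H : Subgroup G} {x y w : MonoidAlgebra ℝ G}

theorem coeff_pow_one_pos (hy : y ∈ simplex G) (hy1 : 0 < y.coeff 1) (k : ℕ) :
    0 < (y ^ k).coeff 1 := by
  induction k with
  | zero => simp [one_def]
  | succ k ih => simpa using coeff_pow_add_mul_pos hy ih (by rwa [pow_one])

theorem eventually_coeff_pow_pos (hy : y ∈ simplex G) (hy1 : 0 < y.coeff 1) :
    ∀ᶠ K in atTop, ∀ g ∈ Subgroup.closure (y.coeff.support : Set G), 0 < (y ^ K).coeff g := by
  let reach : Submonoid G :=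
    { carrier := {g | ∃ k, 0 < (y ^ k).coeff g}
      mul_mem' := fun ⟨j, hj⟩ ⟨k, hk⟩ => ⟨j + k, coeff_pow_add_mul_pos hy hj hk⟩
      one_mem' := ⟨0, by simp [one_def]⟩ }
  have hreach : ∀ g ∈ Subgroup.closure (y.coeff.support : Set G), g ∈ reach := by
    intro g hg
    rw [← Subgroup.mem_toSubmonoid, Subgroup.closure_toSubmonoid_of_finite] at hg
    refine Submonoid.closure_le.mpr (fun a ha => ?_) hg
    exact ⟨1, by rw [pow_one]; exact (hy.1 a).lt_of_ne' (Finsupp.mem_support_iff.mp ha)⟩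
  -- `y 1 > 0` makes the supports of the powers of `y` increase
  refine eventually_all.mpr fun g => ?_
  by_cases hg : g ∈ Subgroup.closure (y.coeff.support : Set G)
  · obtain ⟨k, hk⟩ := hreach g hg
    filter_upwards [eventually_ge_atTop k] with K hK _
    simpa [Nat.add_sub_cancel' hK] using
      coeff_pow_add_mul_pos hy hk (coeff_pow_one_pos hy hy1 (K - k))
  · exact Eventually.of_forall fun _ h => absurd h hg

theorem exists_coeff_pow_pow_pos (hx : x ∈ simplex G) {n p : ℕ} (hn : 0 < n)
    (hn1 : (x ^ n).coeff 1 ≠ 0) (hp : 0 < p) :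
    ∃ K, 0 < K ∧ ∀ h ∈ Subgroup.closure ((x ^ n).coeff.support : Set G),
      0 < ((x ^ p) ^ K).coeff h := by
  have hxn := pow_mem hx n
  have hxn1 : 0 < (x ^ n).coeff 1 := (hxn.1 1).lt_of_ne' hn1
  have hsupp : ((x ^ n).coeff.support : Set G) ⊆ ((x ^ n) ^ p).coeff.support := by
    intro g hg
    have hg' : 0 < ((x ^ n) ^ 1).coeff g := by
      rw [pow_one]; exact (hxn.1 g).lt_of_ne' (Finsupp.mem_support_iff.mp hg)
    have := coeff_pow_add_mul_pos hxn hg' (coeff_pow_one_pos hxn hxn1 (p - 1))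
    rw [Nat.add_sub_cancel' hp, mul_one] at this
    exact Finsupp.mem_support_iff.mpr this.ne'
  obtain ⟨K, hKpos, hK⟩ := ((eventually_coeff_pow_pos (pow_mem hxn p)
    (coeff_pow_one_pos hxn hxn1 p)).and (eventually_ge_atTop 1)).exists
  refine ⟨n * K, Nat.mul_pos hn hK, fun h hh => ?_⟩
  rw [← pow_mul, mul_left_comm, pow_mul, pow_mul]
  exact hKpos h (Subgroup.closure_mono hsupp hh)

theorem exists_abs_coeff_mul_le (hwS : w ∈ simplex G) (hpos : ∀ h ∈ H, 0 < w.coeff h) :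
    ∃ ρ, 0 ≤ ρ ∧ ρ < 1 ∧ ∀ e ∈ supportedIn ℝ H, ∑ g, e.coeff g = 0 →
      ∀ M, (∀ a, |e.coeff a| ≤ M) → ∀ g, |(e * w).coeff g| ≤ ρ * M := by
  classical
  obtain ⟨h₀, hh₀⟩ := Finite.exists_min fun h : H => w.coeff h
  -- Doeblin's minorisation `w ≥ δ • avg H`
  set δ := (Nat.card H : ℝ) * w.coeff h₀
  have hcard : (0 : ℝ) < Nat.card H := Nat.cast_pos.mpr Nat.card_pos
  set v := w - δ • avg H
  have hv0 : ∀ g, 0 ≤ v.coeff g := fun g => by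
    simp only [v, coeff_sub, coeff_smul_apply, Finsupp.sub_apply, smul_eq_mul, coeff_avg, δ]
    split_ifs with hg
    · rw [mul_comm _ (w.coeff _), mul_inv_cancel_right₀ hcard.ne']
      linarith [hh₀ ⟨g, hg⟩]
    · linarith [hwS.1 g]
  have hvsum : ∑ g, v.coeff g = 1 - δ := by
    simp only [v, coeff_sub, coeff_smul_apply, Finsupp.sub_apply, smul_eq_mul, sum_sub_distrib,
      ← mul_sum, hwS.2, (avg_mem_simplex H).2, mul_one]
  refine ⟨1 - δ, hvsum ▸ sum_nonneg fun g _ => hv0 g,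
    sub_lt_self 1 (mul_pos hcard (hpos _ h₀.2)), fun e he he0 M hM g => ?_⟩
  have hew : e * w = e * v := by
    rw [show w = v + δ • avg H by simp [v], mul_add, mul_smul_comm, mul_avg he, he0, zero_smul,
      smul_zero, add_zero]
  rw [hew, ← hvsum, mul_comm]
  exact abs_coeff_mul_le_mul_sum_right hM hv0 g

theorem exists_abs_coeff_mul_pow_sub_avg_le (hwS : w ∈ simplex G) (hw : w ∈ supportedIn ℝ H)
    (hpos : ∀ h ∈ H, 0 < w.coeff h) :
    ∃ ρ, 0 ≤ ρ ∧ ρ < 1 ∧ ∀ u ∈ simplex G, u ∈ supportedIn ℝ H →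
      ∀ q g, |(u * w ^ q).coeff g - (avg H).coeff g| ≤ ρ ^ q := by
  obtain ⟨ρ, hρ0, hρ1, hcontr⟩ := exists_abs_coeff_mul_le hwS hpos
  refine ⟨ρ, hρ0, hρ1, fun u huS hu q => ?_⟩
  induction q with
  | zero =>
    intro g
    rw [pow_zero, mul_one, pow_zero]
    exact abs_sub_le_of_nonneg_of_le (huS.1 g) (coeff_le_one_of_mem_simplex huS g)
      ((avg_mem_simplex H).1 g) (coeff_le_one_of_mem_simplex (avg_mem_simplex H) g)
  | succ q ih =>
    intro g
    set e := u * w ^ q - avg H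
    have he : e ∈ supportedIn ℝ H :=
      sub_mem (mul_mem hu (pow_mem hw q)) (avg_mem_supportedIn H)
    have he0 : ∑ g, e.coeff g = 0 := by
      simp only [e, coeff_sub, Finsupp.sub_apply, sum_sub_distrib,
        (mul_mem huS (pow_mem hwS q)).2, (avg_mem_simplex H).2, sub_self]
    have hstep : u * w ^ (q + 1) - avg H = e * w := by
      rw [sub_mul, avg_mul hw, hwS.2, one_smul, pow_succ, mul_assoc]
    have := hcontr e he he0 _ (fun a => ih a) g
    rwa [← hstep, coeff_sub, Finsupp.sub_apply, ← pow_succ'] at this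

theorem tendsto_coeff_pow_sub_coeff_pow_mod_mul_avg (hx : x ∈ simplex G) {p K : ℕ} (hp : 0 < p)
    (hxp : x ^ p ∈ supportedIn ℝ H) (hK : 0 < K) (hpos : ∀ h ∈ H, 0 < ((x ^ p) ^ K).coeff h)
    (g : G) :
    Tendsto (fun e => (x ^ e).coeff g - (x ^ (e % p) * avg H).coeff g) atTop (𝓝 0) := by
  obtain ⟨ρ, hρ0, hρ1, hρ⟩ :=
    exists_abs_coeff_mul_pow_sub_avg_le (pow_mem (pow_mem hx p) K) (pow_mem hxp K) hpos
  -- `x ^ e = x ^ (e % p) * (x ^ p) ^ (e / p % K) * ((x ^ p) ^ K) ^ (e / p / K)`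
  have hbound : ∀ e, |(x ^ e).coeff g - (x ^ (e % p) * avg H).coeff g| ≤ ρ ^ (e / p / K) := by
    intro e
    have hdiff : (x ^ e).coeff g - (x ^ (e % p) * avg H).coeff g =
        (x ^ (e % p) * ((x ^ p) ^ (e / p) - avg H)).coeff g := by
      rw [mul_sub, coeff_sub, Finsupp.sub_apply, ← pow_mul, ← pow_add, Nat.mod_add_div]
    rw [hdiff, ← mul_one (ρ ^ _), ← (pow_mem hx (e % p)).2]
    refine abs_coeff_mul_le_mul_sum_left (pow_mem hx _).1 (fun a => ?_) g
    have := hρ _ (pow_mem (pow_mem hx p) (e / p % K)) (pow_mem hxp _) (e / p / K) a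
    rwa [← pow_mul (x ^ p), ← pow_add, Nat.mod_add_div, ← Finsupp.sub_apply,
      ← coeff_sub] at this
  refine squeeze_zero_norm hbound ?_
  exact (tendsto_pow_atTop_nhds_zero_of_lt_one hρ0 hρ1).comp
    ((Nat.tendsto_div_const_atTop hK.ne').comp (Nat.tendsto_div_const_atTop hp.ne'))

end Convergence

end MonoidAlgebra

open Fin.NatCast

theorem Nat.eventually_mod_eq_of_modEq {s : ℕ → ℕ} {d q N : ℕ} [NeZero d] {m : Fin d → ℕ}
    (hm : ∀ i, m i < q) (hper : ∀ k ≥ N, ∀ i : Fin d, s (k * d + i) ≡ m i [MOD q]) :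
    ∀ᶠ j in atTop, s j % q = m j := by
  filter_upwards [eventually_ge_atTop (N * d)] with j hj
  have h := hper (j / d) ((Nat.le_div_iff_mul_le (Nat.pos_of_neZero d)).mpr hj) j
  rwa [Fin.val_natCast, Nat.div_add_mod', Nat.ModEq, Nat.mod_eq_of_lt (hm _)] at h

open MonoidAlgebra

open scoped Classical in
theorem stmt19_general {G : Type*} [Group G] [Fintype G]
    (r : ℕ) (hr : 1 < r)
    (x : MonoidAlgebra ℝ G) (hx1 : ∑ g : G, x.coeff g = 1) (hx0 : ∀ g, 0 ≤ x.coeff g)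
    (n : ℕ) (hn : IsLeast {k : ℕ | 0 < k ∧ (x ^ k).coeff (1 : G) ≠ 0} n)
    (H : Subgroup G) (hH : H = Subgroup.closure ((x ^ n).coeff.support : Set G))
    (c : MonoidAlgebra ℝ G)
    (hc : c = (Nat.card H : ℝ)⁻¹ •
      ∑ g ∈ Finset.univ.filter (· ∈ H), MonoidAlgebra.single g (1 : ℝ))
    (mx : ℕ) (hmx : IsLeast {k : ℕ | 0 < k ∧ ((x ^ k).coeff.support : Set G) ⊆ (H : Set G)} mx)
    (d : ℕ) (hd : 0 < d) (m : Fin d → ℕ)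
    (hmlt : ∀ i, m i < mx)
    (hper : ∃ N : ℕ, ∀ k ≥ N, ∀ i : Fin d, r ^ (k * d + (i : ℕ)) ≡ m i [MOD mx]) :
    ∀ g : G,
      Tendsto (fun N : ℕ => ((N : ℝ)⁻¹ • ∑ i ∈ Finset.range N, x ^ r ^ (i + 1)).coeff g)
        atTop (nhds ((((d : ℝ)⁻¹ • ∑ i : Fin d, x ^ m i * c) : MonoidAlgebra ℝ G).coeff g)) := by
  intro g
  obtain ⟨⟨hn0, hn1⟩, -⟩ := hn
  obtain ⟨⟨hmx0, hmxH⟩, -⟩ := hmx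
  obtain ⟨N, hN⟩ := hper
  have : NeZero d := ⟨hd.ne'⟩
  have hxS : x ∈ simplex G := ⟨hx0, hx1⟩
  have hxmx : x ^ mx ∈ supportedIn ℝ H := mem_supportedIn.mpr fun a ha =>
    Finsupp.notMem_support_iff.mp fun h => ha (hmxH h)
  obtain ⟨K, hK, hpos⟩ := exists_coeff_pow_pow_pos hxS hn0 hn1 hmx0
  rw [← hH] at hpos
  obtain rfl : c = avg H := hc
  set L : Fin d → ℝ := fun i => (x ^ m i * avg H).coeff g
  have hlim : Tendsto (fun j : ℕ => (x ^ r ^ j).coeff g - L j) atTop (𝓝 0) := by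
    refine ((tendsto_coeff_pow_sub_coeff_pow_mod_mul_avg hxS hmx0 hxmx hK hpos g).comp
      (tendsto_pow_atTop_atTop_of_one_lt hr)).congr' ?_
    filter_upwards [Nat.eventually_mod_eq_of_modEq hmlt hN] with j hj
    simp only [Function.comp_apply, hj, L]
  have hshift : Tendsto (fun j : ℕ => (x ^ r ^ (j + 1)).coeff g - L ((j : Fin d) + 1)) atTop
      (𝓝 0) := by
    refine (hlim.comp (tendsto_add_atTop_nat 1)).congr fun j => ?_
    simp only [Function.comp_apply, Nat.cast_succ]
  have h := tendsto_cesaro_of_tendsto_sub_natCast (fun i => L (i + 1)) hshift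
  rw [show ∑ i, L (i + 1) = ∑ i, L i from Equiv.sum_comp (Equiv.addRight 1) L] at h
  simpa [coeff_smul_apply, coeff_sum, L] using h

open scoped Classical in
/-- For the map `x ↦ x^r` (`r > 1`) on the simplex of `R[G]`, the Cesàro averages
`q^(n)(x) = (1/n) Σ_{i=1}^n x^{r^i}` converge (coordinatewise) to
`(1/d) Σ_{i=0}^{d-1} x^{m_i} c_x`, where `(m₀, …, m_{d-1})` is the eventually repeating
part of the sequence `(r^n mod m_x)`:  `r^{kd+i} ≡ m_i (mod m_x)` for all large `k`. -/
theorem stmt19 {G : Type*} [Group G] [Fintype G]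
    (r : ℕ) (hr : 1 < r)
    (x : MonoidAlgebra ℝ G) (hx1 : ∑ g : G, x.coeff g = 1) (hx0 : ∀ g, 0 ≤ x.coeff g)
    (n : ℕ) (hn : IsLeast {k : ℕ | 0 < k ∧ (x ^ k).coeff (1 : G) ≠ 0} n)
    (H : Subgroup G) (hH : H = Subgroup.closure ((x ^ n).coeff.support : Set G))
    (c : MonoidAlgebra ℝ G)
    (hc : c = (Nat.card H : ℝ)⁻¹ •
      ∑ g ∈ Finset.univ.filter (· ∈ H), MonoidAlgebra.single g (1 : ℝ))
    (mx : ℕ) (hmx : IsLeast {k : ℕ | 0 < k ∧ ((x ^ k).coeff.support : Set G) ⊆ (H : Set G)} mx)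
    (d : ℕ) (hd : 0 < d) (m : Fin d → ℕ)
    (hmlt : ∀ i, m i < mx) (hminj : Function.Injective m)
    (hper : ∃ N : ℕ, ∀ k ≥ N, ∀ i : Fin d, r ^ (k * d + (i : ℕ)) ≡ m i [MOD mx]) :
    ∀ g : G,
      Tendsto (fun N : ℕ => ((N : ℝ)⁻¹ • ∑ i ∈ Finset.range N, x ^ r ^ (i + 1)).coeff g)
        atTop (nhds ((((d : ℝ)⁻¹ • ∑ i : Fin d, x ^ m i * c) : MonoidAlgebra ℝ G).coeff g)) :=
  stmt19_general r hr x hx1 hx0 n hn H hH c hc mx hmx d hd m hmlt hper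
end
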